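/- arXiv:1704.05964 — 12 statements merged into one kernel-verified Lean document; each statement's English description precedes it below -/
import Mathlib

section
/- Suppose a temporal-sampling P of length t in a metric space (X,d) admits a temporal (k,r,δ)-clustering with r > 0, and for each level i ∈ {1,…,t} let C(i) be a 2r-net of P(i). Then there exist trajectories σ_1,…,σ_k of P, each with displacement δ(σ_j) ≤ 2r + δ, such that for every i ∈ {1,…,t} and every c ∈ C(i) there is some j ∈ {1,…,k} with σ_j(i) = c. -/
/-- `τ` is a trajectory of the temporal-sampling `P` of length `t`:
a choice of a point `τ i ∈ P i` in every level. -/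
def IsTrajectory {X : Type*} [MetricSpace X] {t : ℕ} (P : Fin t → Finset X)
    (τ : Fin t → X) : Prop :=
  ∀ i, τ i ∈ P i

/-- The displacement of the trajectory `τ` is at most `δ`, i.e.
`max_{1 ≤ i ≤ t-1} d(τ(i), τ(i+1)) ≤ δ` (vacuously true when `t = 1`, given `δ ≥ 0`). -/
def DispLE {X : Type*} [MetricSpace X] {t : ℕ} (τ : Fin t → X) (δ : ℝ) : Prop :=
  ∀ (i : ℕ) (h : i + 1 < t),
    dist (τ ⟨i, Nat.lt_of_succ_lt h⟩) (τ ⟨i + 1, h⟩) ≤ δ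

/-- `𝒞` is a temporal `(k,r,δ)`-clustering of the temporal-sampling `P`:
a nonempty finite set of at most `k` trajectories of `P`, with `rad∞(𝒞) ≤ r`
and `δ(𝒞) ≤ δ`. -/
def IsTemporalClustering {X : Type*} [MetricSpace X] {t : ℕ} (P : Fin t → Finset X)
    (𝒞 : Set (Fin t → X)) (k : ℕ) (r δ : ℝ) : Prop :=
  𝒞.Nonempty ∧ 𝒞.Finite ∧ 𝒞.ncard ≤ k ∧
  (∀ τ ∈ 𝒞, IsTrajectory P τ) ∧
  (∀ i : Fin t, ∀ p ∈ P i, ∃ τ ∈ 𝒞, dist p (τ i) ≤ r) ∧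
  (∀ τ ∈ 𝒞, DispLE τ δ)

/-- `C` is an `s`-net of the finite set `S`: a subset of `S` whose points are pairwise
at distance `> s` and such that every point of `S` is within distance `s` of `C`. -/
def IsNet {X : Type*} [MetricSpace X] (s : ℝ) (S C : Finset X) : Prop :=
  C ⊆ S ∧ (∀ x ∈ C, ∀ y ∈ C, x ≠ y → s < dist x y) ∧
  (∀ p ∈ S, ∃ c ∈ C, dist p c ≤ s)

/-- if `P` admits a temporal `(k,r,δ)`-clustering with `r > 0`, and `C i`
is a `2r`-net of `P i` for every level `i`, then there are trajectories `σ_1, …, σ_k`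
of `P`, each of displacement at most `2r + δ`, which jointly cover all net points:
for every level `i` and every `c ∈ C i` some `σ_j` satisfies `σ_j i = c`. -/
theorem statement2 {X : Type*} [MetricSpace X] {t : ℕ} (P : Fin t → Finset X)
    (hP : ∀ i, (P i).Nonempty) (k : ℕ) (r δ : ℝ) (hr : 0 < r) (hδ : 0 ≤ δ)
    (hclus : ∃ 𝒬 : Set (Fin t → X), IsTemporalClustering P 𝒬 k r δ)
    (C : Fin t → Finset X) (hC : ∀ i, IsNet (2 * r) (P i) (C i)) :
    ∃ σ : Fin k → (Fin t → X),
      (∀ j, IsTrajectory P (σ j) ∧ DispLE (σ j) (2 * r + δ)) ∧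
      (∀ i : Fin t, ∀ c ∈ C i, ∃ j, σ j i = c) := by

  classical
  obtain ⟨𝒬, ⟨⟨τ₀, hτ₀⟩, hfin, hcard, htraj, hrad, hdisp⟩⟩ := hclus
  -- pick: replace each coordinate by the unique nearby net point if one exists
  set pick : (Fin t → X) → (Fin t → X) := fun τ i =>
    if h : ∃ c, c ∈ C i ∧ dist c (τ i) ≤ r then h.choose else τ i with hpick
  have pick_close : ∀ τ : Fin t → X, ∀ i, dist (pick τ i) (τ i) ≤ r := by
    intro τ i
    by_cases h : ∃ c, c ∈ C i ∧ dist c (τ i) ≤ r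
    · simp only [hpick, dif_pos h]; exact h.choose_spec.2
    · simp only [hpick, dif_neg h, dist_self]; exact le_of_lt hr
  have pick_mem : ∀ τ ∈ 𝒬, ∀ i, pick τ i ∈ P i := by
    intro τ hτ i
    by_cases h : ∃ c, c ∈ C i ∧ dist c (τ i) ≤ r
    · simp only [hpick, dif_pos h]; exact (hC i).1 h.choose_spec.1
    · simp only [hpick, dif_neg h]; exact htraj τ hτ i
  -- enumerate 𝒬 by a list of length ≤ k
  set L : List (Fin t → X) := hfin.toFinset.toList with hL
  have hmemL : ∀ τ, τ ∈ L ↔ τ ∈ 𝒬 := by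
    intro τ; rw [hL, Finset.mem_toList, Set.Finite.mem_toFinset]
  have hlen : L.length ≤ k := by
    rw [hL, Finset.length_toList, ← Set.ncard_eq_toFinset_card 𝒬 hfin]; exact hcard
  set g : Fin k → (Fin t → X) := fun j => L.getD j τ₀ with hg
  have hg𝒬 : ∀ j, g j ∈ 𝒬 := by
    intro j
    by_cases h : (j : ℕ) < L.length
    · have : g j ∈ L := by
        rw [hg]; simp only []
        rw [List.getD_eq_getElem L τ₀ h]
        exact List.getElem_mem h
      exact (hmemL _).1 this
    · have : g j = τ₀ := by
        rw [hg]; simp only []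
        exact List.getD_eq_default L τ₀ (le_of_not_gt h)
      rw [this]; exact hτ₀
  refine ⟨fun j => pick (g j), ?_, ?_⟩
  · intro j
    constructor
    · intro i; exact pick_mem (g j) (hg𝒬 j) i
    · intro i hi
      have h1 := pick_close (g j) ⟨i, Nat.lt_of_succ_lt hi⟩
      have h2 := pick_close (g j) ⟨i + 1, hi⟩
      have h3 := hdisp (g j) (hg𝒬 j) i hi
      calc dist (pick (g j) ⟨i, Nat.lt_of_succ_lt hi⟩) (pick (g j) ⟨i + 1, hi⟩)
          ≤ dist (pick (g j) ⟨i, Nat.lt_of_succ_lt hi⟩) (g j ⟨i, Nat.lt_of_succ_lt hi⟩)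
            + dist (g j ⟨i, Nat.lt_of_succ_lt hi⟩) (g j ⟨i + 1, hi⟩)
            + dist (g j ⟨i + 1, hi⟩) (pick (g j) ⟨i + 1, hi⟩) := dist_triangle4 _ _ _ _
        _ ≤ r + δ + r := by
            have h2' : dist (g j ⟨i + 1, hi⟩) (pick (g j) ⟨i + 1, hi⟩) ≤ r := by
              rw [dist_comm]; exact h2
            gcongr
        _ = 2 * r + δ := by ring
  · intro i c hc
    have hcP : c ∈ P i := (hC i).1 hc
    obtain ⟨τ, hτ𝒬, hτc⟩ := hrad i c hcP
    -- find index of τ in L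
    have hτL : τ ∈ L := (hmemL τ).2 hτ𝒬
    obtain ⟨n, hn, hget⟩ := List.getElem_of_mem hτL
    refine ⟨⟨n, lt_of_lt_of_le hn hlen⟩, ?_⟩
    have hgj : g ⟨n, lt_of_lt_of_le hn hlen⟩ = τ := by
      rw [hg]; simp only []
      rw [List.getD_eq_getElem L τ₀ hn]; exact hget
    show pick (g ⟨n, lt_of_lt_of_le hn hlen⟩) i = c
    rw [hgj]
    have hex : ∃ c', c' ∈ C i ∧ dist c' (τ i) ≤ r := ⟨c, hc, hτc⟩
    simp only [hpick, dif_pos hex]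
    obtain ⟨hc'C, hc'd⟩ := hex.choose_spec
    by_contra hne
    have : 2 * r < dist hex.choose c := (hC i).2.1 _ hc'C _ hc hne
    have : dist hex.choose c ≤ 2 * r := by
      calc dist hex.choose c ≤ dist hex.choose (τ i) + dist (τ i) c := dist_triangle _ _ _
        _ ≤ r + r := by
            have : dist (τ i) c ≤ r := by rw [dist_comm]; exact hτc
            gcongr
        _ = 2 * r := by ring
    linarith
end

section
/- Suppose a temporal-sampling P of length t in a metric space (X,d) admits a temporal (k,r,δ)-clustering with r > 0, and for each level i ∈ {1,…,t} let C(i) be a 2r-net of P(i). Then there exist trajectories σ_1,…,σ_{2k} of P, each with displacement δ(σ_j) ≤ r + δ, such that for every i ∈ {1,…,t} and every c ∈ C(i) there is some j ∈ {1,…,2k} with σ_j(i) = c. -/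
open Classical in
/-- Snap `τ i` to the unique net point within distance `r`, if any. -/
noncomputable def snap {X : Type*} [MetricSpace X] {t : ℕ} (C : Fin t → Finset X)
    (r : ℝ) (τ : Fin t → X) (i : Fin t) : X :=
  if h : ∃ c ∈ C i, dist c (τ i) ≤ r then h.choose else τ i

lemma snap_mem_or {X : Type*} [MetricSpace X] {t : ℕ} (C : Fin t → Finset X)
    (r : ℝ) (τ : Fin t → X) (i : Fin t) :
    snap C r τ i ∈ C i ∨ snap C r τ i = τ i := by
  unfold snap
  split
  · next h => exact Or.inl h.choose_spec.1
  · exact Or.inr rfl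

lemma dist_snap {X : Type*} [MetricSpace X] {t : ℕ} (C : Fin t → Finset X)
    {r : ℝ} (hr : 0 ≤ r) (τ : Fin t → X) (i : Fin t) :
    dist (snap C r τ i) (τ i) ≤ r := by
  unfold snap
  split
  · next h => exact h.choose_spec.2
  · simpa using hr

lemma snap_eq {X : Type*} [MetricSpace X] {t : ℕ} {C : Fin t → Finset X}
    {r : ℝ} {τ : Fin t → X} {i : Fin t}
    (hsep : ∀ x ∈ C i, ∀ y ∈ C i, x ≠ y → 2 * r < dist x y)
    {c : X} (hc : c ∈ C i) (hd : dist c (τ i) ≤ r) :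
    snap C r τ i = c := by
  have h : ∃ c ∈ C i, dist c (τ i) ≤ r := ⟨c, hc, hd⟩
  rw [snap, dif_pos h]
  by_contra hne
  have h1 := h.choose_spec.1
  have h2 := h.choose_spec.2
  have hs := hsep _ h1 _ hc hne
  have htri : dist h.choose c ≤ dist h.choose (τ i) + dist c (τ i) := by
    rw [dist_comm c (τ i)]; exact dist_triangle _ _ _
  linarith

/-- if `P` admits a temporal `(k,r,δ)`-clustering with `r > 0`, and `C i`
is a `2r`-net of `P i` for every level `i`, then there are trajectories `σ_1, …, σ_{2k}`
of `P`, each of displacement at most `r + δ`, which jointly cover all net points: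
for every level `i` and every `c ∈ C i` some `σ_j` satisfies `σ_j i = c`. -/
theorem statement4 {X : Type*} [MetricSpace X] {t : ℕ} (P : Fin t → Finset X)
    (hP : ∀ i, (P i).Nonempty) (k : ℕ) (r δ : ℝ) (hr : 0 < r) (hδ : 0 ≤ δ)
    (hclus : ∃ 𝒬 : Set (Fin t → X), IsTemporalClustering P 𝒬 k r δ)
    (C : Fin t → Finset X) (hC : ∀ i, IsNet (2 * r) (P i) (C i)) :
    ∃ σ : Fin (2 * k) → (Fin t → X),
      (∀ j, IsTrajectory P (σ j) ∧ DispLE (σ j) (r + δ)) ∧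
      (∀ i : Fin t, ∀ c ∈ C i, ∃ j, σ j i = c) := by
  classical
  obtain ⟨𝒬, hne, hfin, hcard, htraj, hrad, hdisp⟩ := hclus
  have hk : 1 ≤ k := le_trans ((Set.ncard_pos hfin).mpr hne) hcard
  obtain ⟨τ0, hτ0⟩ := hne
  set L : List (Fin t → X) := hfin.toFinset.toList with hLdef
  have hLlen : L.length ≤ k := by
    rw [hLdef, Finset.length_toList]
    rw [Set.ncard_eq_toFinset_card 𝒬 hfin] at hcard
    exact hcard
  have hmemL : ∀ τ ∈ 𝒬, τ ∈ L := by
    intro τ hτ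
    rw [hLdef, Finset.mem_toList, Set.Finite.mem_toFinset]
    exact hτ
  set f : ℕ → (Fin t → X) := fun m => L.getD m τ0 with hfdef
  have hf𝒬 : ∀ m, f m ∈ 𝒬 := by
    intro m
    by_cases h : m < L.length
    · have he : f m = L[m] := List.getD_eq_getElem L τ0 h
      rw [he]
      have hm := List.getElem_mem h
      exact (Set.Finite.mem_toFinset hfin).mp (Finset.mem_toList.mp hm)
    · have he : f m = τ0 := List.getD_eq_default L τ0 (le_of_not_gt h)
      rw [he]; exact hτ0
  have hfsurj : ∀ τ ∈ 𝒬, ∃ m, m < k ∧ f m = τ := by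
    intro τ hτ
    obtain ⟨n, hn, hget⟩ := List.mem_iff_getElem.mp (hmemL τ hτ)
    refine ⟨n, lt_of_lt_of_le hn hLlen, ?_⟩
    show L.getD n τ0 = τ
    rw [List.getD_eq_getElem L τ0 hn]
    exact hget
  refine ⟨fun j i => if i.val % 2 = j.val / k then snap C r (f (j.val % k)) i
      else f (j.val % k) i, ?_, ?_⟩
  · intro j
    have hτ : f (j.val % k) ∈ 𝒬 := hf𝒬 _
    have hτtraj := htraj _ hτ
    constructor
    · intro i
      dsimp only
      split
      · rcases snap_mem_or C r (f (j.val % k)) i with h | h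
        · exact (hC i).1 h
        · rw [h]; exact hτtraj i
      · exact hτtraj i
    · intro i hi
      have hj2 : j.val / k < 2 := Nat.div_lt_iff_lt_mul (by omega) |>.mpr (by
        have := j.isLt; omega)
      have hd : dist (f (j.val % k) ⟨i, Nat.lt_of_succ_lt hi⟩) (f (j.val % k) ⟨i + 1, hi⟩) ≤ δ :=
        hdisp _ hτ i hi
      obtain ⟨a, ha⟩ : ∃ a, (j : ℕ) / k = a := ⟨_, rfl⟩
      rw [ha] at hj2
      dsimp only
      rw [ha]
      by_cases hc : i % 2 = a
      · rw [if_pos hc, if_neg (by omega)]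
        have h1 := dist_snap C hr.le (f (j.val % k)) ⟨i, Nat.lt_of_succ_lt hi⟩
        have h2 := dist_triangle (snap C r (f (j.val % k)) ⟨i, Nat.lt_of_succ_lt hi⟩)
          (f (j.val % k) ⟨i, Nat.lt_of_succ_lt hi⟩) (f (j.val % k) ⟨i + 1, hi⟩)
        linarith
      · rw [if_neg hc, if_pos (by omega)]
        have h1 := dist_snap C hr.le (f (j.val % k)) ⟨i + 1, hi⟩
        have h2 := dist_triangle (f (j.val % k) ⟨i, Nat.lt_of_succ_lt hi⟩)
          (f (j.val % k) ⟨i + 1, hi⟩) (snap C r (f (j.val % k)) ⟨i + 1, hi⟩)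
        rw [dist_comm] at h1
        linarith
  · intro i c hc
    have hcP : c ∈ P i := (hC i).1 hc
    obtain ⟨τ, hτ𝒬, hτd⟩ := hrad i c hcP
    obtain ⟨m, hm, hfm⟩ := hfsurj τ hτ𝒬
    have hi2 : i.val % 2 < 2 := Nat.mod_lt _ (by omega)
    have hjv : m + i.val % 2 * k < 2 * k := by nlinarith
    refine ⟨⟨m + i.val % 2 * k, hjv⟩, ?_⟩
    have hmod : (m + i.val % 2 * k) % k = m := by
      rw [Nat.add_mul_mod_self_right, Nat.mod_eq_of_lt hm]
    have hdiv : (m + i.val % 2 * k) / k = i.val % 2 := by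
      rw [Nat.add_mul_div_right _ _ (by omega : 0 < k), Nat.div_eq_of_lt hm, Nat.zero_add]
    dsimp only
    rw [hmod, hdiv, if_pos rfl, hfm]
    exact snap_eq (hC i).2.1 hc hτd
end

section
/- Let P be a temporal-sampling of length t and size n ≥ 2 in a metric space (X,d) that admits a temporal (k,r,δ)-clustering with k ≥ 1. Let τ_1, τ_2, … be any sequence of trajectories in 𝒯_δ(P) chosen greedily: for each j, τ_j maximizes over τ ∈ 𝒯_δ(P) the cardinality of tube(τ,r) ∖ ⋃_{j' < j} tube(τ_{j'},r). Then for m = ⌈k·ln n⌉, the tubes of radius r around τ_1,…,τ_m cover every point: for all i ∈ {1,…,t} and all p ∈ P(i) there is some j ≤ m with d(p, τ_j(i)) ≤ r. In particular, {τ_1,…,τ_m} is a temporal (⌈k·ln n⌉, r, δ)-clustering of P. -/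
/-- The tube of radius `r` around the trajectory `τ`:
`tube(τ,r) = {(i,p) : p ∈ P i, d(p, τ i) ≤ r}`. -/
def tube {X : Type*} [MetricSpace X] {t : ℕ} (P : Fin t → Finset X)
    (τ : Fin t → X) (r : ℝ) : Set (Fin t × X) :=
  {q | q.2 ∈ P q.1 ∧ dist q.2 (τ q.1) ≤ r}

/-- let `P` have size `n ≥ 2` and admit a temporal `(k,r,δ)`-clustering with
`k ≥ 1`.  If `τ 0, τ 1, …` is any greedy sequence of trajectories of displacement `≤ δ`
(each `τ j` maximizes the number of yet-uncovered (level, point) pairs in its `r`-tube),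
then for `m = ⌈k ln n⌉` the tubes of `τ 0, …, τ (m-1)` cover every point of `P`, and
`{τ 0, …, τ (m-1)}` is a temporal `(⌈k ln n⌉, r, δ)`-clustering of `P`. -/
theorem statement7 {X : Type*} [MetricSpace X] {t : ℕ} (P : Fin t → Finset X)
    (hP : ∀ i, (P i).Nonempty) (k : ℕ) (r δ : ℝ) (hr : 0 ≤ r) (hδ : 0 ≤ δ)
    (hk : 1 ≤ k)
    (n : ℕ) (hn : n = ∑ i, (P i).card) (hn2 : 2 ≤ n)
    (hclus : ∃ 𝒬 : Set (Fin t → X), IsTemporalClustering P 𝒬 k r δ)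
    (τ : ℕ → (Fin t → X))
    (hτ : ∀ j, IsTrajectory P (τ j) ∧ DispLE (τ j) δ)
    (hgreedy : ∀ j : ℕ, ∀ σ : Fin t → X, IsTrajectory P σ → DispLE σ δ →
      (tube P σ r \ ⋃ j' ∈ Finset.range j, tube P (τ j') r).ncard ≤
      (tube P (τ j) r \ ⋃ j' ∈ Finset.range j, tube P (τ j') r).ncard)
    (m : ℕ) (hm : m = ⌈(k : ℝ) * Real.log n⌉₊) :
    (∀ i : Fin t, ∀ p ∈ P i, ∃ j < m, dist p (τ j i) ≤ r) ∧
    IsTemporalClustering P (τ '' {j | j < m}) m r δ := by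
  classical
  obtain ⟨𝒬, h1, h2, h3, h4, h5, h6⟩ := hclus
  have hkR : (0:ℝ) < k := by exact_mod_cast hk
  have hnR : (1:ℝ) < n := by exact_mod_cast lt_of_lt_of_le one_lt_two hn2
  set A : Set (Fin t × X) := {q | q.2 ∈ P q.1} with hAdef
  set F : Finset (Fin t × X) := Finset.univ.biUnion (fun i => (P i).image fun p => (i, p))
    with hFdef
  have hAF : A = ↑F := by
    ext ⟨i, p⟩
    simp [hAdef, hFdef, eq_comm, Prod.ext_iff]
  have hAfin : A.Finite := hAF ▸ F.finite_toSet
  have hAn : A.ncard ≤ n := by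
    rw [hAF, Set.ncard_coe_finset, hn]
    refine le_trans Finset.card_biUnion_le ?_
    exact Finset.sum_le_sum fun i _ => Finset.card_image_le
  have htubeA : ∀ σ : Fin t → X, tube P σ r ⊆ A := fun σ q hq => hq.1
  set U : ℕ → Set (Fin t × X) :=
    fun j => A \ ⋃ j' ∈ Finset.range j, tube P (τ j') r with hUdef
  have hUfin : ∀ j, (U j).Finite := fun j => hAfin.subset Set.diff_subset
  -- σ's new coverage equals intersection with U j
  have hEq : ∀ (j : ℕ) (σ : Fin t → X),
      tube P σ r \ (⋃ j' ∈ Finset.range j, tube P (τ j') r) = U j ∩ tube P σ r := by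
    intro j σ
    ext q
    constructor
    · intro ⟨hq1, hq2⟩; exact ⟨⟨htubeA σ hq1, hq2⟩, hq1⟩
    · intro ⟨⟨_, hq2⟩, hq1⟩; exact ⟨hq1, hq2⟩
  -- the recurrence
  have hrec : ∀ j, ((U (j+1)).ncard : ℝ) ≤ (U j).ncard * (1 - 1/k) := by
    intro j
    have hU1 : U (j+1) = U j \ tube P (τ j) r := by
      ext q
      simp only [hUdef, Set.mem_diff, Set.mem_iUnion, Finset.mem_range,
        exists_prop, not_exists, not_and]
      constructor
      · intro ⟨hqA, hq⟩
        exact ⟨⟨hqA, fun j' hj' => hq j' (Nat.lt_succ_of_lt hj')⟩,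
          fun hq' => (hq j (Nat.lt_succ_self j) hq')⟩
      · intro ⟨⟨hqA, hq⟩, hq'⟩
        refine ⟨hqA, fun j' hj' => ?_⟩
        rcases Nat.lt_succ_iff_lt_or_eq.mp hj' with h | h
        · exact hq j' h
        · subst h; exact hq'
    have hsplit : (U j ∩ tube P (τ j) r).ncard + (U (j+1)).ncard = (U j).ncard := by
      rw [hU1]
      exact Set.ncard_inter_add_ncard_diff_eq_ncard (U j) (tube P (τ j) r) (hUfin j)
    -- pigeonhole: U j ≤ sum over 𝒬 of intersections
    set c := (U j ∩ tube P (τ j) r).ncard with hc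
    have hterm : ∀ σ ∈ h2.toFinset, (U j ∩ tube P σ r).ncard ≤ c := by
      intro σ hσ
      rw [Set.Finite.mem_toFinset] at hσ
      have := hgreedy j σ (h4 σ hσ) (h6 σ hσ)
      rwa [hEq j σ, hEq j (τ j)] at this
    have hsum : (U j).ncard ≤ h2.toFinset.card * c := by
      have hsub : (hUfin j).toFinset ⊆
          h2.toFinset.biUnion (fun σ =>
            ((hUfin j).inter_of_left _ : (U j ∩ tube P σ r).Finite).toFinset) := by
        intro q hq
        rw [Set.Finite.mem_toFinset] at hq
        obtain ⟨σ, hσ𝒬, hσd⟩ := h5 q.1 q.2 hq.1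
        rw [Finset.mem_biUnion]
        exact ⟨σ, h2.mem_toFinset.mpr hσ𝒬, (Set.Finite.mem_toFinset _).mpr ⟨hq, hq.1, hσd⟩⟩
      calc (U j).ncard = (hUfin j).toFinset.card := Set.ncard_eq_toFinset_card _ (hUfin j)
        _ ≤ _ := Finset.card_le_card hsub
        _ ≤ ∑ σ ∈ h2.toFinset, (U j ∩ tube P σ r).ncard := by
              refine le_trans Finset.card_biUnion_le (Finset.sum_le_sum fun σ _ => ?_)
              exact le_of_eq (Set.ncard_eq_toFinset_card _ _).symm
        _ ≤ ∑ σ ∈ h2.toFinset, c := Finset.sum_le_sum hterm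
        _ = h2.toFinset.card * c := by rw [Finset.sum_const, smul_eq_mul]
    have hkc : (U j).ncard ≤ k * c := by
      refine hsum.trans (Nat.mul_le_mul_right c ?_)
      rwa [← Set.ncard_eq_toFinset_card _ h2]
    have hkcR : ((U j).ncard : ℝ) ≤ (k : ℝ) * c := by exact_mod_cast hkc
    have hsplitR : (c : ℝ) + (U (j+1)).ncard = (U j).ncard := by exact_mod_cast hsplit
    have hdiv : ((U j).ncard : ℝ) / k ≤ c := (div_le_iff₀ hkR).mpr (by linarith)
    have hmul : ((U j).ncard : ℝ) * (1 - 1/k) = (U j).ncard - (U j).ncard / k := by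
      field_simp
    linarith
  have hfac0 : (0:ℝ) ≤ 1 - 1/(k:ℝ) := by
    have : 1/(k:ℝ) ≤ 1 := by
      rw [div_le_one hkR]; exact_mod_cast hk
    linarith
  have hbound : ∀ j, ((U j).ncard : ℝ) ≤ n * (1 - 1/k)^j := by
    intro j
    induction j with
    | zero =>
        simp only [pow_zero, mul_one]
        have : U 0 = A := by simp [hUdef]
        rw [this]
        exact_mod_cast hAn
    | succ j ih =>
        calc ((U (j+1)).ncard : ℝ) ≤ (U j).ncard * (1 - 1/k) := hrec j
          _ ≤ (n * (1 - 1/k)^j) * (1 - 1/k) := by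
              exact mul_le_mul_of_nonneg_right ih hfac0
          _ = n * (1 - 1/k)^(j+1) := by ring
  have hm1 : 0 < m := by
    rw [hm]
    exact Nat.one_le_ceil_iff.mpr (mul_pos hkR (Real.log_pos hnR))
  have hUm : U m = ∅ := by
    have hlt : (n:ℝ) * (1 - 1/k)^m < 1 := by
      have h1 : (1 - 1/(k:ℝ)) < Real.exp (-(1/k)) := by
        have := Real.add_one_lt_exp (x := -(1/(k:ℝ))) (neg_ne_zero.mpr (by positivity))
        linarith
      have h2 : (1 - 1/(k:ℝ))^m < Real.exp (-(1/k))^m :=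
        pow_lt_pow_left₀ h1 hfac0 hm1.ne'
      have h3 : Real.exp (-(1/(k:ℝ)))^m = Real.exp (-((m:ℝ)/k)) := by
        rw [← Real.exp_nat_mul]
        congr 1
        ring
      have hklog : (k:ℝ) * Real.log n ≤ m := by
        rw [hm]; exact Nat.le_ceil _
      have hn0 : (0:ℝ) < n := by linarith
      have h4 : Real.exp (-((m:ℝ)/k)) ≤ Real.exp (-Real.log n) := by
        apply Real.exp_le_exp.mpr
        apply neg_le_neg
        rw [le_div_iff₀ hkR]
        linarith [hklog]
      have h5 : (n:ℝ) * Real.exp (-Real.log n) = 1 := by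
        rw [Real.exp_neg, Real.exp_log hn0]
        field_simp
      calc (n:ℝ) * (1 - 1/k)^m < n * Real.exp (-(1/(k:ℝ)))^m :=
            mul_lt_mul_of_pos_left h2 hn0
        _ = n * Real.exp (-((m:ℝ)/k)) := by rw [h3]
        _ ≤ n * Real.exp (-Real.log n) := mul_le_mul_of_nonneg_left h4 (le_of_lt hn0)
        _ = 1 := h5
    have := hbound m
    have h0 : ((U m).ncard : ℝ) < 1 := lt_of_le_of_lt this hlt
    have h0' : (U m).ncard = 0 := by exact_mod_cast Nat.lt_one_iff.mp (by exact_mod_cast h0)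
    exact (Set.ncard_eq_zero (hUfin m)).mp h0'
  have hcovm : ∀ i : Fin t, ∀ p ∈ P i, ∃ j < m, dist p (τ j i) ≤ r := by
    intro i p hp
    have hqA : ((i, p) : Fin t × X) ∈ A := hp
    have hnotU : ((i, p) : Fin t × X) ∉ U m := by rw [hUm]; exact Set.notMem_empty _
    have : ((i, p) : Fin t × X) ∈ ⋃ j' ∈ Finset.range m, tube P (τ j') r := by
      by_contra h
      exact hnotU ⟨hqA, h⟩
    simp only [Set.mem_iUnion, Finset.mem_range, exists_prop] at this
    obtain ⟨j, hj, _, hd⟩ := this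
    exact ⟨j, hj, hd⟩
  refine ⟨hcovm, ⟨τ 0, ⟨0, hm1, rfl⟩⟩, (Set.finite_Iio m).image τ, ?_, ?_, ?_, ?_⟩
  · calc (τ '' {j | j < m}).ncard ≤ (Set.Iio m).ncard :=
          Set.ncard_image_le (Set.finite_Iio m)
      _ = m := by rw [← Finset.coe_range, Set.ncard_coe_finset, Finset.card_range]
  · rintro σ ⟨j, _, rfl⟩; exact (hτ j).1
  · intro i p hp
    obtain ⟨j, hj, hd⟩ := hcovm i p hp
    exact ⟨τ j, ⟨j, hj, rfl⟩, hd⟩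
  · rintro σ ⟨j, _, rfl⟩; exact (hτ j).2
end

section
/- Let P be a temporal-sampling of length t in a metric space (X,d) and fix r ≥ 0. The set function −W is submodular: for all nonempty finite sets 𝒜 ⊆ ℬ of trajectories of P and every trajectory τ of P, W(𝒜) − W(𝒜 ∪ {τ}) ≥ W(ℬ) − W(ℬ ∪ {τ}). -/
/-- `cost(i;𝒞) = Σ_{p ∈ P i} min_{τ ∈ 𝒞} d(p, τ i)`, the level-`i` median cost of the
set of trajectories `𝒞` (the infimum is the minimum for `𝒞` finite and nonempty). -/
noncomputable def levelCost {X : Type*} [MetricSpace X] {t : ℕ} (P : Fin t → Finset X)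
    (𝒞 : Set (Fin t → X)) (i : Fin t) : ℝ :=
  ∑ p ∈ P i, ⨅ τ : 𝒞, dist p ((τ : Fin t → X) i)

/-- `𝒞` is a temporal `(k,r,δ)`-median-clustering of `P`: a nonempty finite set of at
most `k` trajectories of `P` with `rad₁(𝒞) ≤ r` and `δ(𝒞) ≤ δ`. -/
def IsTemporalMedianClustering {X : Type*} [MetricSpace X] {t : ℕ} (P : Fin t → Finset X)
    (𝒞 : Set (Fin t → X)) (k : ℕ) (r δ : ℝ) : Prop :=
  𝒞.Nonempty ∧ 𝒞.Finite ∧ 𝒞.ncard ≤ k ∧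
  (∀ τ ∈ 𝒞, IsTrajectory P τ) ∧
  (∀ i : Fin t, levelCost P 𝒞 i ≤ r) ∧
  (∀ τ ∈ 𝒞, DispLE τ δ)

/-- The potential `W(𝒞) = Σ_{i=1}^t max(0, cost(i;𝒞) − r)`. -/
noncomputable def Wpot {X : Type*} [MetricSpace X] {t : ℕ} (P : Fin t → Finset X)
    (r : ℝ) (𝒞 : Set (Fin t → X)) : ℝ :=
  ∑ i : Fin t, max 0 (levelCost P 𝒞 i - r)

private lemma inf_bdd {α : Type*} (g : α → ℝ) (hg : ∀ x, 0 ≤ g x) (A : Set α) :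
    BddBelow (Set.range fun x : A => g x) :=
  ⟨0, by rintro _ ⟨x, rfl⟩; exact hg _⟩

private lemma inf_mono' {α : Type*} (g : α → ℝ) (hg : ∀ x, 0 ≤ g x) {A B : Set α}
    (hAB : A ⊆ B) (hA : A.Nonempty) :
    (⨅ x : B, g x) ≤ ⨅ x : A, g x := by
  haveI : Nonempty A := hA.to_subtype
  haveI : Nonempty B := (hA.mono hAB).to_subtype
  exact le_ciInf fun a => ciInf_le (inf_bdd g hg B) ⟨a, hAB a.2⟩

private lemma inf_union' {α : Type*} (g : α → ℝ) (hg : ∀ x, 0 ≤ g x) {A : Set α}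
    (hA : A.Nonempty) (τ : α) :
    (⨅ x : ↥(A ∪ {τ}), g x) = min (⨅ x : A, g x) (g τ) := by
  haveI : Nonempty A := hA.to_subtype
  haveI : Nonempty ↥(A ∪ {τ}) := (hA.mono Set.subset_union_left).to_subtype
  apply le_antisymm
  · refine le_min (inf_mono' g hg Set.subset_union_left hA) ?_
    exact ciInf_le (inf_bdd g hg _) ⟨τ, Or.inr rfl⟩
  · apply le_ciInf
    rintro ⟨x, hx | hx⟩
    · exact (min_le_left _ _).trans (ciInf_le (inf_bdd g hg A) ⟨x, hx⟩)
    · rw [Set.mem_singleton_iff] at hx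
      subst hx
      exact min_le_right _ _

private lemma key_scalar (r a a' b b' : ℝ) (h1 : b ≤ a) (h2 : b' ≤ b)
    (h3 : a' + b ≤ a + b') :
    max 0 (b - r) - max 0 (b' - r) ≤ max 0 (a - r) - max 0 (a' - r) := by
  have e : ∀ x : ℝ, max 0 (x - r) = if x ≤ r then 0 else x - r := by
    intro x
    split <;> [exact max_eq_left (by linarith); exact max_eq_right (by linarith)]
  rw [e a, e a', e b, e b']
  split_ifs <;> linarith

/-- the set function `−W` is submodular: for nonempty finite sets
`𝒜 ⊆ ℬ` of trajectories of `P` and any trajectory `τ` of `P`,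
`W(𝒜) − W(𝒜 ∪ {τ}) ≥ W(ℬ) − W(ℬ ∪ {τ})`. -/
theorem statement8 {X : Type*} [MetricSpace X] {t : ℕ} (P : Fin t → Finset X)
    (hP : ∀ i, (P i).Nonempty) (r : ℝ) (hr : 0 ≤ r)
    (𝒜 ℬ : Set (Fin t → X)) (hAB : 𝒜 ⊆ ℬ)
    (hA : 𝒜.Nonempty) (hAfin : 𝒜.Finite) (hBfin : ℬ.Finite)
    (hBtraj : ∀ τ ∈ ℬ, IsTrajectory P τ)
    (τ : Fin t → X) (hτ : IsTrajectory P τ) :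
    Wpot P r ℬ - Wpot P r (ℬ ∪ {τ}) ≤ Wpot P r 𝒜 - Wpot P r (𝒜 ∪ {τ}) := by
  have hB : ℬ.Nonempty := hA.mono hAB
  -- per-level facts
  have hg : ∀ (p : X) (i : Fin t), ∀ σ : Fin t → X, 0 ≤ dist p (σ i) :=
    fun p i σ => dist_nonneg
  have hba : ∀ i, levelCost P ℬ i ≤ levelCost P 𝒜 i := by
    intro i
    exact Finset.sum_le_sum fun p _ =>
      inf_mono' (fun σ => dist p (σ i)) (hg p i) hAB hA
  have hb'b : ∀ i, levelCost P (ℬ ∪ {τ}) i ≤ levelCost P ℬ i := by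
    intro i
    exact Finset.sum_le_sum fun p _ =>
      inf_mono' (fun σ => dist p (σ i)) (hg p i) Set.subset_union_left hB
  have hcross : ∀ i, levelCost P (𝒜 ∪ {τ}) i + levelCost P ℬ i ≤
      levelCost P 𝒜 i + levelCost P (ℬ ∪ {τ}) i := by
    intro i
    rw [levelCost, levelCost, levelCost, levelCost, ← Finset.sum_add_distrib,
      ← Finset.sum_add_distrib]
    refine Finset.sum_le_sum fun p _ => ?_
    rw [inf_union' (fun σ => dist p (σ i)) (hg p i) hA τ,
      inf_union' (fun σ => dist p (σ i)) (hg p i) hB τ]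
    have hAB' : (⨅ x : ℬ, dist p ((x : Fin t → X) i)) ≤
        ⨅ x : 𝒜, dist p ((x : Fin t → X) i) :=
      inf_mono' (fun σ => dist p (σ i)) (hg p i) hAB hA
    rcases le_total (⨅ x : 𝒜, dist p ((x : Fin t → X) i)) (dist p (τ i)) with h|h
    · rw [min_eq_left h, min_eq_left (hAB'.trans h)]
    · rw [min_eq_right h]
      rcases le_total (⨅ x : ℬ, dist p ((x : Fin t → X) i)) (dist p (τ i)) with h2|h2
      · rw [min_eq_left h2]; linarith
      · rw [min_eq_right h2]; linarith
  rw [Wpot, Wpot, Wpot, Wpot, ← Finset.sum_sub_distrib, ← Finset.sum_sub_distrib]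
  exact Finset.sum_le_sum fun i _ =>
    key_scalar r (levelCost P 𝒜 i) (levelCost P (𝒜 ∪ {τ}) i)
      (levelCost P ℬ i) (levelCost P (ℬ ∪ {τ}) i) (hba i) (hb'b i) (hcross i)
end

section
/- Let P be a temporal-sampling of length t in a metric space (X,d) and fix r ≥ 0 and δ ≥ 0. If P admits a temporal (k,r,δ)-median-clustering with k ≥ 1, then for every nonempty finite set 𝒞 of trajectories of P there exists a trajectory σ of P with displacement δ(σ) ≤ δ such that W(𝒞 ∪ {σ}) ≤ (1 − 1/k) · W(𝒞). -/
private lemma min_sum_aux9 {α : Type*} (s : Finset α) (c : α → ℝ) (w : ℝ)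
    (hw : 0 ≤ w) (hc : ∀ a ∈ s, 0 ≤ c a) (h : w ≤ ∑ a ∈ s, c a) :
    w ≤ ∑ a ∈ s, min w (c a) := by
  by_cases hx : ∃ a ∈ s, w ≤ c a
  · obtain ⟨a, ha, hwa⟩ := hx
    have h1 : min w (c a) = w := min_eq_left hwa
    have h2 := Finset.single_le_sum (f := fun a => min w (c a))
      (fun b hb => le_min hw (hc b hb)) ha
    linarith
  · push_neg at hx
    have he : ∀ a ∈ s, min w (c a) = c a := fun a ha => min_eq_right (hx a ha).le
    rw [Finset.sum_congr rfl he]; exact h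

private lemma level_aux9 {β : Type*} (Q : Finset β) (L r : ℝ) (A B lc : β → ℝ)
    (hAs : ∑ q ∈ Q, A q = L) (hBs : ∑ q ∈ Q, B q ≤ r)
    (hlc1 : ∀ q ∈ Q, lc q ≤ L) (hlc2 : ∀ q ∈ Q, lc q ≤ B q + (L - A q)) :
    ∑ q ∈ Q, max 0 (lc q - r) ≤ ((Q.card : ℝ) - 1) * max 0 (L - r) := by
  set w := max 0 (L - r) with hw
  have hw0 : 0 ≤ w := le_max_left _ _
  have hLr : L - r ≤ w := le_max_right _ _
  have key : ∀ q ∈ Q, max 0 (lc q - r) + min w (max 0 (A q - B q)) ≤ w := by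
    intro q hq
    have hlcw : lc q - r ≤ w := by linarith [hlc1 q hq]
    have hlc2' := hlc2 q hq
    rcases lt_or_ge (A q - B q) 0 with h | h
    · have hm : max 0 (A q - B q) = 0 := max_eq_left h.le
      rw [hm, min_eq_right hw0]
      simpa using max_le hw0 hlcw
    · rcases le_or_gt w (A q - B q) with h1 | h1
      · have hm : max 0 (A q - B q) = A q - B q := max_eq_right h
        have hT : max 0 (lc q - r) = 0 := max_eq_left (by linarith)
        rw [hT, hm, min_eq_left h1]; linarith
      · have hm : max 0 (A q - B q) = A q - B q := max_eq_right h
        rw [hm, min_eq_right h1.le]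
        have hT : max 0 (lc q - r) ≤ w - (A q - B q) := max_le (by linarith) (by linarith)
        linarith
  have hsc : w ≤ ∑ q ∈ Q, max 0 (A q - B q) := by
    have h1 : ∑ q ∈ Q, (A q - B q) ≤ ∑ q ∈ Q, max 0 (A q - B q) :=
      Finset.sum_le_sum (fun q _ => le_max_right _ _)
    have h2 : (0:ℝ) ≤ ∑ q ∈ Q, max 0 (A q - B q) :=
      Finset.sum_nonneg (fun q _ => le_max_left _ _)
    rw [Finset.sum_sub_distrib, hAs] at h1
    exact max_le h2 (by linarith)
  have hms := min_sum_aux9 Q (fun q => max 0 (A q - B q)) w hw0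
    (fun a _ => le_max_left _ _) hsc
  have hsum := Finset.sum_le_sum key
  rw [Finset.sum_add_distrib, Finset.sum_const, nsmul_eq_mul] at hsum
  linarith


/-- if `P` admits a temporal `(k,r,δ)`-median-clustering with `k ≥ 1`, then
for every nonempty finite set `𝒞` of trajectories of `P` there is a trajectory `σ` of
displacement at most `δ` with `W(𝒞 ∪ {σ}) ≤ (1 − 1/k) · W(𝒞)`. -/
theorem statement9 {X : Type*} [MetricSpace X] {t : ℕ} (P : Fin t → Finset X)
    (hP : ∀ i, (P i).Nonempty) (k : ℕ) (r δ : ℝ) (hr : 0 ≤ r) (hδ : 0 ≤ δ)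
    (hk : 1 ≤ k)
    (hclus : ∃ 𝒬 : Set (Fin t → X), IsTemporalMedianClustering P 𝒬 k r δ)
    (𝒞 : Set (Fin t → X)) (h𝒞ne : 𝒞.Nonempty) (h𝒞fin : 𝒞.Finite)
    (h𝒞traj : ∀ τ ∈ 𝒞, IsTrajectory P τ) :
    ∃ σ : Fin t → X, IsTrajectory P σ ∧ DispLE σ δ ∧
      Wpot P r (𝒞 ∪ {σ}) ≤ (1 - 1 / (k : ℝ)) * Wpot P r 𝒞 := by
  classical
  obtain ⟨𝒬, h𝒬ne, h𝒬fin, h𝒬card, h𝒬traj, h𝒬cost, h𝒬disp⟩ := hclus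
  haveI := h𝒬ne.to_subtype
  haveI := h𝒞ne.to_subtype
  set Q : Finset (Fin t → X) := h𝒬fin.toFinset with hQdef
  have hQne : Q.Nonempty := by
    rw [hQdef, Set.Finite.toFinset_nonempty]; exact h𝒬ne
  have hQmem : ∀ q, q ∈ Q ↔ q ∈ 𝒬 := fun q => h𝒬fin.mem_toFinset
  have hQcoe : (Q : Set (Fin t → X)) = 𝒬 := h𝒬fin.coe_toFinset
  have hQcard : Q.card = 𝒬.ncard := by rw [← hQcoe, Set.ncard_coe_finset]
  -- nearest assignment
  have hminex : ∀ (i : Fin t) (p : X), ∃ q, q ∈ Q ∧ ∀ q' ∈ Q, dist p (q i) ≤ dist p (q' i) := by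
    intro i p
    obtain ⟨q, hq, hmin⟩ := Q.exists_min_image (fun q => dist p (q i)) hQne
    exact ⟨q, hq, hmin⟩
  let n : Fin t → X → (Fin t → X) := fun i p => (hminex i p).choose
  have hn1 : ∀ i p, n i p ∈ Q := fun i p => (hminex i p).choose_spec.1
  have hn2 : ∀ i p, ∀ q' ∈ Q, dist p (n i p i) ≤ dist p (q' i) :=
    fun i p => (hminex i p).choose_spec.2
  -- infimum facts
  have hbdd : ∀ (𝒮 : Set (Fin t → X)) (p : X) (i : Fin t),
      BddBelow (Set.range fun τ : 𝒮 => dist p ((τ : Fin t → X) i)) := by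
    intro 𝒮 p i
    exact ⟨0, by rintro x ⟨τ, rfl⟩; exact dist_nonneg⟩
  have hinf_le : ∀ (𝒮 : Set (Fin t → X)) (p : X) (i : Fin t) (τ : Fin t → X), τ ∈ 𝒮 →
      (⨅ σ : 𝒮, dist p ((σ : Fin t → X) i)) ≤ dist p (τ i) := by
    intro 𝒮 p i τ hτ
    exact ciInf_le (hbdd 𝒮 p i) ⟨τ, hτ⟩
  have hinf_mono : ∀ (q : Fin t → X) (p : X) (i : Fin t),
      (⨅ σ : ↥(𝒞 ∪ {q}), dist p ((σ : Fin t → X) i)) ≤ ⨅ σ : 𝒞, dist p ((σ : Fin t → X) i) := by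
    intro q p i
    exact le_ciInf fun τ => hinf_le _ p i τ.1 (Set.mem_union_left _ τ.2)
  -- per-level bound
  have hlevel : ∀ i : Fin t,
      ∑ q ∈ Q, max 0 (levelCost P (𝒞 ∪ {q}) i - r)
        ≤ ((Q.card : ℝ) - 1) * max 0 (levelCost P 𝒞 i - r) := by
    intro i
    apply level_aux9 Q (levelCost P 𝒞 i) r
      (fun q => ∑ p ∈ (P i).filter (fun p => n i p = q), ⨅ τ : 𝒞, dist p ((τ : Fin t → X) i))
      (fun q => ∑ p ∈ (P i).filter (fun p => n i p = q), dist p (q i))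
      (fun q => levelCost P (𝒞 ∪ {q}) i)
    · -- sum of A = levelCost 𝒞
      exact Finset.sum_fiberwise_of_maps_to (fun p _ => hn1 i p) _
    · -- sum of B ≤ r
      have he : ∀ q ∈ Q, ∑ p ∈ (P i).filter (fun p => n i p = q), dist p (q i)
          = ∑ p ∈ (P i).filter (fun p => n i p = q), dist p (n i p i) := by
        intro q hq
        refine Finset.sum_congr rfl fun p hp => ?_
        rw [(Finset.mem_filter.mp hp).2]
      rw [Finset.sum_congr rfl he,
        Finset.sum_fiberwise_of_maps_to (fun p _ => hn1 i p) (fun p => dist p (n i p i))]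
      have hle : ∑ p ∈ P i, dist p (n i p i) ≤ levelCost P 𝒬 i := by
        refine Finset.sum_le_sum fun p _ => ?_
        exact le_ciInf fun τ => hn2 i p τ.1 ((hQmem τ.1).mpr τ.2)
      exact hle.trans (h𝒬cost i)
    · -- monotonicity
      intro q hq
      exact Finset.sum_le_sum fun p _ => hinf_mono q p i
    · -- the key upper bound
      intro q hq
      have hsplit := Finset.sum_filter_add_sum_filter_not (P i) (fun p => n i p = q)
        (fun p => ⨅ τ : ↥(𝒞 ∪ {q}), dist p ((τ : Fin t → X) i))
      have hsplitC := Finset.sum_filter_add_sum_filter_not (P i) (fun p => n i p = q)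
        (fun p => ⨅ τ : 𝒞, dist p ((τ : Fin t → X) i))
      have h1 : ∑ p ∈ (P i).filter (fun p => n i p = q),
          (⨅ τ : ↥(𝒞 ∪ {q}), dist p ((τ : Fin t → X) i))
          ≤ ∑ p ∈ (P i).filter (fun p => n i p = q), dist p (q i) := by
        refine Finset.sum_le_sum fun p _ => ?_
        exact hinf_le _ p i q (Set.mem_union_right _ rfl)
      have h2 : ∑ p ∈ (P i).filter (fun p => ¬ n i p = q),
          (⨅ τ : ↥(𝒞 ∪ {q}), dist p ((τ : Fin t → X) i))
          ≤ ∑ p ∈ (P i).filter (fun p => ¬ n i p = q),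
            (⨅ τ : 𝒞, dist p ((τ : Fin t → X) i)) :=
        Finset.sum_le_sum fun p _ => hinf_mono q p i
      have hLC : levelCost P (𝒞 ∪ {q}) i
          = ∑ p ∈ (P i).filter (fun p => n i p = q),
              (⨅ τ : ↥(𝒞 ∪ {q}), dist p ((τ : Fin t → X) i))
            + ∑ p ∈ (P i).filter (fun p => ¬ n i p = q),
              (⨅ τ : ↥(𝒞 ∪ {q}), dist p ((τ : Fin t → X) i)) := hsplit.symm
      have hLC2 : levelCost P 𝒞 i
          = ∑ p ∈ (P i).filter (fun p => n i p = q),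
              (⨅ τ : 𝒞, dist p ((τ : Fin t → X) i))
            + ∑ p ∈ (P i).filter (fun p => ¬ n i p = q),
              (⨅ τ : 𝒞, dist p ((τ : Fin t → X) i)) := hsplitC.symm
      rw [hLC, hLC2]
      linarith
  -- summing over levels
  have hWnn : 0 ≤ Wpot P r 𝒞 := Finset.sum_nonneg fun i _ => le_max_left _ _
  have hsumW : ∑ q ∈ Q, Wpot P r (𝒞 ∪ {q}) ≤ ((Q.card : ℝ) - 1) * Wpot P r 𝒞 := by
    simp only [Wpot]
    rw [Finset.sum_comm, Finset.mul_sum]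
    exact Finset.sum_le_sum fun i _ => hlevel i
  -- averaging
  have hk0 : (0:ℝ) < (k:ℝ) := by exact_mod_cast Nat.lt_of_lt_of_le Nat.zero_lt_one hk
  have hcardk : (Q.card : ℝ) ≤ (k:ℝ) := by
    exact_mod_cast hQcard ▸ h𝒬card
  have h5 : (Q.card : ℝ) / k ≤ 1 := (div_le_one hk0).mpr hcardk
  have havg : ∃ q ∈ Q, Wpot P r (𝒞 ∪ {q}) ≤ (1 - 1 / (k : ℝ)) * Wpot P r 𝒞 := by
    apply Finset.exists_le_of_sum_le hQne
    rw [Finset.sum_const, nsmul_eq_mul]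
    have e1 : (Q.card : ℝ) * ((1 - 1/(k:ℝ)) * Wpot P r 𝒞)
        = (Q.card : ℝ) * Wpot P r 𝒞 - (Q.card : ℝ)/(k:ℝ) * Wpot P r 𝒞 := by
      field_simp
    have e2 : (Q.card : ℝ)/(k:ℝ) * Wpot P r 𝒞 ≤ 1 * Wpot P r 𝒞 :=
      mul_le_mul_of_nonneg_right h5 hWnn
    rw [e1]
    linarith
  obtain ⟨q, hqQ, hqW⟩ := havg
  have hq𝒬 : q ∈ 𝒬 := (hQmem q).mp hqQ
  exact ⟨q, h𝒬traj q hq𝒬, h𝒬disp q hq𝒬, hqW⟩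
end

section
/- Let P be a temporal-sampling of length t in a metric space (X,d) and fix r ≥ 0 and δ ≥ 0. Suppose P admits a temporal (k,r,δ)-median-clustering with k ≥ 1. Let 𝒞_0 = {τ_0} for any trajectory τ_0 ∈ 𝒯_δ(P), and for each i ≥ 1 let 𝒞_i = 𝒞_{i−1} ∪ {τ_i}, where τ_i ∈ 𝒯_δ(P) minimizes W(𝒞_{i−1} ∪ {τ}) over all τ ∈ 𝒯_δ(P). Then for every L ≥ 0, W(𝒞_L) ≤ (1 − 1/k)^L · W(𝒞_0). -/
section helpers
variable {X : Type*} [MetricSpace X] {t : ℕ}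

/-- infimum of distances over a set of trajectories, as sInf of image. -/
noncomputable def edist' (𝒮 : Set (Fin t → X)) (p : X) (i : Fin t) : ℝ :=
  sInf ((fun τ : Fin t → X => dist p (τ i)) '' 𝒮)

lemma iInf_eq_edist' (𝒮 : Set (Fin t → X)) (p : X) (i : Fin t) :
    (⨅ τ : 𝒮, dist p ((τ : Fin t → X) i)) = edist' 𝒮 p i := by
  rw [edist', Set.image_eq_range, iInf]

lemma bddBelow_edist (𝒮 : Set (Fin t → X)) (p : X) (i : Fin t) :
    BddBelow ((fun τ : Fin t → X => dist p (τ i)) '' 𝒮) := by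
  refine ⟨0, fun x hx => ?_⟩
  obtain ⟨τ, -, rfl⟩ := hx
  exact dist_nonneg

lemma edist'_nonneg (𝒮 : Set (Fin t → X)) (h : 𝒮.Nonempty) (p : X) (i : Fin t) :
    0 ≤ edist' 𝒮 p i :=
  le_csInf (h.image _) (fun x hx => by obtain ⟨τ, -, rfl⟩ := hx; exact dist_nonneg)

lemma edist'_union (𝒮 𝒯 : Set (Fin t → X)) (hS : 𝒮.Nonempty) (hT : 𝒯.Nonempty)
    (p : X) (i : Fin t) :
    edist' (𝒮 ∪ 𝒯) p i = min (edist' 𝒮 p i) (edist' 𝒯 p i) := by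
  rw [edist', Set.image_union, csInf_union (bddBelow_edist 𝒮 p i) (hS.image _)
    (bddBelow_edist 𝒯 p i) (hT.image _)]
  rfl

lemma edist'_singleton (σ : Fin t → X) (p : X) (i : Fin t) :
    edist' {σ} p i = dist p (σ i) := by
  simp [edist']

lemma edist'_mem (𝒮 : Set (Fin t → X)) (h : 𝒮.Nonempty) (hfin : 𝒮.Finite)
    (p : X) (i : Fin t) : ∃ τ ∈ 𝒮, edist' 𝒮 p i = dist p (τ i) := by
  have := Set.Nonempty.csInf_mem (h.image (fun τ : Fin t → X => dist p (τ i)))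
    (hfin.image _)
  obtain ⟨τ, hτ, hτ2⟩ := this
  exact ⟨τ, hτ, hτ2.symm⟩

lemma levelCost_eq (P : Fin t → Finset X) (𝒮 : Set (Fin t → X)) (i : Fin t) :
    levelCost P 𝒮 i = ∑ p ∈ P i, edist' 𝒮 p i := by
  unfold levelCost
  exact Finset.sum_congr rfl (fun p _ => iInf_eq_edist' 𝒮 p i)

end helpers

lemma real_key {α : Type*} (s : Finset α) (r c : ℝ)
    (cq : α → ℝ) (hle : ∀ q ∈ s, cq q ≤ c)
    (hsum : c - r ≤ ∑ q ∈ s, (c - cq q)) :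
    max 0 (c - r) ≤ ∑ q ∈ s, (max 0 (c - r) - max 0 (cq q - r)) := by
  have hnn : ∀ q ∈ s, 0 ≤ max 0 (c - r) - max 0 (cq q - r) := by
    intro q hq
    have : max 0 (cq q - r) ≤ max 0 (c - r) :=
      max_le_max le_rfl (by have := hle q hq; linarith)
    linarith
  by_cases hcr : c ≤ r
  · have h0 : max 0 (c - r) = 0 := max_eq_left (by linarith)
    rw [h0]
    exact Finset.sum_nonneg fun q hq => by have := hnn q hq; rwa [h0] at this
  push_neg at hcr
  by_cases hex : ∃ q0 ∈ s, cq q0 ≤ r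
  · obtain ⟨q0, hq0, hq0r⟩ := hex
    have h0 : max 0 (cq q0 - r) = 0 := max_eq_left (by linarith)
    have hterm : max 0 (c - r) - max 0 (cq q0 - r) = max 0 (c - r) := by
      rw [h0]; ring
    calc max 0 (c - r) = max 0 (c - r) - max 0 (cq q0 - r) := hterm.symm
      _ ≤ _ := Finset.single_le_sum hnn hq0
  · push_neg at hex
    have heq : ∀ q ∈ s, max 0 (c - r) - max 0 (cq q - r) = c - cq q := by
      intro q hq
      rw [max_eq_right (by linarith), max_eq_right (by have := hex q hq; linarith)]
      ring
    rw [Finset.sum_congr rfl heq, max_eq_right (by linarith)]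
    exact hsum

lemma Wpot_nonneg {X : Type*} [MetricSpace X] {t : ℕ} (P : Fin t → Finset X)
    (r : ℝ) (𝒞 : Set (Fin t → X)) : 0 ≤ Wpot P r 𝒞 :=
  Finset.sum_nonneg fun i _ => le_max_left _ _

/-- Key step: adding the best trajectory of 𝒬 drops W by a factor (1 - 1/k). -/
lemma key_step {X : Type*} [MetricSpace X] {t : ℕ} (P : Fin t → Finset X)
    (k : ℕ) (r δ : ℝ) (hk : 1 ≤ k)
    (𝒬 : Set (Fin t → X)) (hQ : IsTemporalMedianClustering P 𝒬 k r δ)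
    (𝒞 : Set (Fin t → X)) (hne : 𝒞.Nonempty) (hfin : 𝒞.Finite) :
    ∃ q ∈ 𝒬, Wpot P r (𝒞 ∪ {q}) ≤ (1 - 1 / (k : ℝ)) * Wpot P r 𝒞 := by
  obtain ⟨hQne, hQfin, hQcard, -, hQrad, -⟩ := hQ
  set Qf : Finset (Fin t → X) := hQfin.toFinset with hQf
  have hQfne : Qf.Nonempty := by
    rwa [hQf, Set.Finite.toFinset_nonempty]
  have hmemQf : ∀ q, q ∈ Qf ↔ q ∈ 𝒬 := fun q => hQfin.mem_toFinset
  -- per-level inequality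
  have hlevel : ∀ i : Fin t, max 0 (levelCost P 𝒞 i - r) ≤
      ∑ q ∈ Qf, (max 0 (levelCost P 𝒞 i - r) - max 0 (levelCost P (𝒞 ∪ {q}) i - r)) := by
    intro i
    apply real_key
    · -- hle : levelCost (𝒞 ∪ {q}) ≤ levelCost 𝒞
      intro q hq
      rw [levelCost_eq, levelCost_eq]
      apply Finset.sum_le_sum
      intro p _
      rw [edist'_union 𝒞 {q} hne (Set.singleton_nonempty q)]
      exact min_le_left _ _
    · -- hsum
      have hCQ : levelCost P (𝒞 ∪ 𝒬) i ≤ r := by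
        refine le_trans ?_ (hQrad i)
        rw [levelCost_eq, levelCost_eq]
        apply Finset.sum_le_sum
        intro p _
        rw [edist'_union 𝒞 𝒬 hne hQne]
        exact min_le_right _ _
      have hkey : levelCost P 𝒞 i - levelCost P (𝒞 ∪ 𝒬) i ≤
          ∑ q ∈ Qf, (levelCost P 𝒞 i - levelCost P (𝒞 ∪ {q}) i) := by
        simp only [levelCost_eq, ← Finset.sum_sub_distrib]
        rw [Finset.sum_comm]
        apply Finset.sum_le_sum
        intro p _
        -- pointwise: e𝒞 - e(𝒞∪𝒬) ≤ Σ_q (e𝒞 - e(𝒞∪{q}))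
        obtain ⟨q0, hq0, hq0e⟩ := edist'_mem 𝒬 hQne hQfin p i
        have hq0f : q0 ∈ Qf := (hmemQf q0).mpr hq0
        have hstar : edist' (𝒞 ∪ 𝒬) p i = edist' (𝒞 ∪ {q0}) p i := by
          rw [edist'_union 𝒞 𝒬 hne hQne,
            edist'_union 𝒞 {q0} hne (Set.singleton_nonempty q0),
            edist'_singleton, ← hq0e]
        rw [hstar]
        refine Finset.single_le_sum (f := fun q => edist' 𝒞 p i - edist' (𝒞 ∪ {q}) p i)
          (fun q hq => ?_) hq0f
        show 0 ≤ edist' 𝒞 p i - edist' (𝒞 ∪ {q}) p i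
        rw [edist'_union 𝒞 {q} hne (Set.singleton_nonempty q)]
        have := min_le_left (edist' 𝒞 p i) (edist' {q} p i)
        linarith
      linarith
  -- Sum over levels
  have hW : Wpot P r 𝒞 ≤ ∑ q ∈ Qf, (Wpot P r 𝒞 - Wpot P r (𝒞 ∪ {q})) := by
    unfold Wpot
    calc ∑ i : Fin t, max 0 (levelCost P 𝒞 i - r)
        ≤ ∑ i : Fin t, ∑ q ∈ Qf, (max 0 (levelCost P 𝒞 i - r)
            - max 0 (levelCost P (𝒞 ∪ {q}) i - r)) :=
          Finset.sum_le_sum fun i _ => hlevel i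
      _ = _ := by rw [Finset.sum_comm]; simp [Finset.sum_sub_distrib]
  -- averaging
  set m : ℕ := Qf.card with hm
  have hm1 : 1 ≤ m := Finset.card_pos.mpr hQfne
  have hmk : m ≤ k := by
    rwa [hm, hQf, ← Set.ncard_eq_toFinset_card _ hQfin]
  have havg : ∃ q ∈ Qf, Wpot P r (𝒞 ∪ {q}) ≤ (1 - 1 / (m : ℝ)) * Wpot P r 𝒞 := by
    refine Finset.exists_le_of_sum_le hQfne ?_
    have : ∑ q ∈ Qf, Wpot P r (𝒞 ∪ {q}) ≤ (m : ℝ) * Wpot P r 𝒞 - Wpot P r 𝒞 := by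
      have := hW
      rw [Finset.sum_sub_distrib, Finset.sum_const, nsmul_eq_mul] at this
      linarith
    calc ∑ q ∈ Qf, Wpot P r (𝒞 ∪ {q}) ≤ (m : ℝ) * Wpot P r 𝒞 - Wpot P r 𝒞 := this
      _ = ∑ _q ∈ Qf, ((1 - 1 / (m : ℝ)) * Wpot P r 𝒞) := by
          rw [Finset.sum_const, nsmul_eq_mul]
          have hm0 : (m : ℝ) ≠ 0 := by positivity
          field_simp
          ring
  obtain ⟨q, hq, hqle⟩ := havg
  refine ⟨q, (hmemQf q).mp hq, le_trans hqle ?_⟩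
  apply mul_le_mul_of_nonneg_right _ (Wpot_nonneg P r 𝒞)
  have h1 : (1 : ℝ) ≤ m := by exact_mod_cast hm1
  have h2 : (m : ℝ) ≤ k := by exact_mod_cast hmk
  have : 1 / (k : ℝ) ≤ 1 / (m : ℝ) := by
    apply one_div_le_one_div_of_le <;> linarith
  linarith

/-- suppose `P` admits a temporal `(k,r,δ)`-median-clustering with `k ≥ 1`.
Let `τseq 0, τseq 1, …` be trajectories of displacement `≤ δ` chosen greedily: writing
`𝒞_L = {τseq 0, …, τseq L}`, each `τseq (i+1)` minimizes `W(𝒞_i ∪ {σ})` over all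
trajectories `σ ∈ 𝒯_δ(P)`.  Then `W(𝒞_L) ≤ (1 − 1/k)^L · W(𝒞_0)` for every `L`. -/
theorem statement10 {X : Type*} [MetricSpace X] {t : ℕ} (P : Fin t → Finset X)
    (hP : ∀ i, (P i).Nonempty) (k : ℕ) (r δ : ℝ) (hr : 0 ≤ r) (hδ : 0 ≤ δ)
    (hk : 1 ≤ k)
    (hclus : ∃ 𝒬 : Set (Fin t → X), IsTemporalMedianClustering P 𝒬 k r δ)
    (τseq : ℕ → (Fin t → X))
    (hτ : ∀ j, IsTrajectory P (τseq j) ∧ DispLE (τseq j) δ)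
    (hgreedy : ∀ i : ℕ, ∀ σ : Fin t → X, IsTrajectory P σ → DispLE σ δ →
      Wpot P r (τseq '' Set.Iic (i + 1)) ≤ Wpot P r ((τseq '' Set.Iic i) ∪ {σ})) :
    ∀ L : ℕ, Wpot P r (τseq '' Set.Iic L) ≤
      (1 - 1 / (k : ℝ)) ^ L * Wpot P r (τseq '' Set.Iic 0) := by
  obtain ⟨𝒬, hQ⟩ := hclus
  intro L
  induction L with
  | zero => simp
  | succ L ih =>
    have hne : (τseq '' Set.Iic L).Nonempty :=
      ⟨τseq 0, Set.mem_image_of_mem _ (Set.mem_Iic.mpr (Nat.zero_le L))⟩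
    have hfin : (τseq '' Set.Iic L).Finite := (Set.finite_Iic L).image _
    obtain ⟨q, hqQ, hqle⟩ := key_step P k r δ hk 𝒬 hQ _ hne hfin
    have hqtraj : IsTrajectory P q := hQ.2.2.2.1 q hqQ
    have hqdisp : DispLE q δ := hQ.2.2.2.2.2 q hqQ
    have h1 := hgreedy L q hqtraj hqdisp
    have hkR : (1:ℝ) ≤ (k:ℝ) := by exact_mod_cast hk
    have h0 : (0:ℝ) ≤ 1 - 1/(k:ℝ) := by
      have : 1/(k:ℝ) ≤ 1 := by rw [div_le_one (by linarith)]; linarith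
      linarith
    calc Wpot P r (τseq '' Set.Iic (L+1)) ≤ Wpot P r ((τseq '' Set.Iic L) ∪ {q}) := h1
      _ ≤ (1 - 1/(k:ℝ)) * Wpot P r (τseq '' Set.Iic L) := hqle
      _ ≤ (1 - 1/(k:ℝ)) * ((1-1/(k:ℝ))^L * Wpot P r (τseq '' Set.Iic 0)) :=
          mul_le_mul_of_nonneg_left ih h0
      _ = (1-1/(k:ℝ))^(L+1) * Wpot P r (τseq '' Set.Iic 0) := by ring
end

section
/- Let P be a temporal-sampling of length t and size n in a metric space (X,d) such that any two distinct points appearing in P are at distance at least 1 and at most Δ. Let ε > 0 with ε ≤ nΔ, let r ≥ 1, δ ≥ 0, and k ≥ 1. If P admits a temporal (k,r,δ)-median-clustering, then P admits a temporal (1 + ⌈k·ln(nΔ/ε)⌉, (1+ε)r, δ)-median-clustering. -/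
namespace S11

variable {X : Type*} [MetricSpace X] {t : ℕ}

noncomputable def cst (P : Fin t → Finset X) (C : Finset (Fin t → X)) (hC : C.Nonempty)
    (i : Fin t) : ℝ :=
  ∑ p ∈ P i, C.inf' hC fun τ => dist p (τ i)

noncomputable def W (P : Fin t → Finset X) (r : ℝ) (C : Finset (Fin t → X))
    (hC : C.Nonempty) : ℝ :=
  ∑ i : Fin t, max 0 (cst P C hC i - r)

lemma cst_nonneg (P : Fin t → Finset X) (C : Finset (Fin t → X)) (hC : C.Nonempty)
    (i : Fin t) : 0 ≤ cst P C hC i :=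
  Finset.sum_nonneg fun _ _ => Finset.le_inf' hC _ fun _ _ => dist_nonneg

lemma W_nonneg (P : Fin t → Finset X) (r : ℝ) (C : Finset (Fin t → X)) (hC : C.Nonempty) :
    0 ≤ W P r C hC :=
  Finset.sum_nonneg fun _ _ => le_max_left _ _

lemma max_le_W (P : Fin t → Finset X) (r : ℝ) (C : Finset (Fin t → X)) (hC : C.Nonempty)
    (i : Fin t) : max 0 (cst P C hC i - r) ≤ W P r C hC :=
  Finset.single_le_sum (f := fun j => max 0 (cst P C hC j - r))
    (fun _ _ => le_max_left _ _) (Finset.mem_univ i)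

lemma cst_insert_le [DecidableEq (Fin t → X)] (P : Fin t → Finset X)
    (C : Finset (Fin t → X)) (hC : C.Nonempty) (σ : Fin t → X) (i : Fin t) :
    cst P (insert σ C) (Finset.insert_nonempty σ C) i ≤ cst P C hC i := by
  refine Finset.sum_le_sum fun p _ => ?_
  rw [Finset.inf'_insert hC]
  exact inf_le_right

lemma sum_decrease [DecidableEq (Fin t → X)] (P : Fin t → Finset X)
    (C Q : Finset (Fin t → X)) (hC : C.Nonempty) (hQ : Q.Nonempty) (i : Fin t) :
    cst P C hC i - cst P Q hQ i ≤
      ∑ σ ∈ Q, (cst P C hC i - cst P (insert σ C) (Finset.insert_nonempty σ C) i) := by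
  unfold cst
  rw [← Finset.sum_sub_distrib]
  have hrw : ∀ σ ∈ Q,
      ((∑ p ∈ P i, C.inf' hC fun τ => dist p (τ i)) -
        ∑ p ∈ P i, (insert σ C).inf' (Finset.insert_nonempty σ C) fun τ => dist p (τ i))
      = ∑ p ∈ P i, ((C.inf' hC fun τ => dist p (τ i)) -
          (insert σ C).inf' (Finset.insert_nonempty σ C) fun τ => dist p (τ i)) := by
    intro σ _
    rw [Finset.sum_sub_distrib]
  rw [Finset.sum_congr rfl hrw, Finset.sum_comm]
  refine Finset.sum_le_sum fun p _ => ?_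
  obtain ⟨σs, hσs, hmin⟩ := Finset.exists_mem_eq_inf' hQ (fun τ => dist p (τ i))
  have hterm : ∀ σ ∈ Q, 0 ≤ (C.inf' hC fun τ => dist p (τ i)) -
      (insert σ C).inf' (Finset.insert_nonempty σ C) fun τ => dist p (τ i) := by
    intro σ _
    have : ((insert σ C).inf' (Finset.insert_nonempty σ C) fun τ => dist p (τ i))
        ≤ C.inf' hC fun τ => dist p (τ i) := by
      rw [Finset.inf'_insert hC]; exact inf_le_right
    linarith
  have hstar : ((insert σs C).inf' (Finset.insert_nonempty σs C) fun τ => dist p (τ i))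
      ≤ dist p (σs i) :=
    Finset.inf'_le _ (Finset.mem_insert_self σs C)
  calc (C.inf' hC fun τ => dist p (τ i)) - Q.inf' hQ (fun τ => dist p (τ i))
      ≤ (C.inf' hC fun τ => dist p (τ i)) -
        (insert σs C).inf' (Finset.insert_nonempty σs C) fun τ => dist p (τ i) := by
        rw [hmin]; linarith
    _ ≤ _ := Finset.single_le_sum hterm hσs

lemma level_key [DecidableEq (Fin t → X)] (P : Fin t → Finset X) (r : ℝ)
    (C Q : Finset (Fin t → X)) (hC : C.Nonempty) (hQ : Q.Nonempty) (i : Fin t)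
    (hQr : cst P Q hQ i ≤ r) :
    max 0 (cst P C hC i - r) ≤
      ∑ σ ∈ Q, (max 0 (cst P C hC i - r) -
        max 0 (cst P (insert σ C) (Finset.insert_nonempty σ C) i - r)) := by
  set a := cst P C hC i with ha
  have hterm : ∀ σ ∈ Q, 0 ≤ max 0 (a - r) -
      max 0 (cst P (insert σ C) (Finset.insert_nonempty σ C) i - r) := by
    intro σ _
    have h1 := cst_insert_le P C hC σ i
    have : max 0 (cst P (insert σ C) (Finset.insert_nonempty σ C) i - r) ≤ max 0 (a - r) :=
      max_le_max le_rfl (by linarith)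
    linarith
  rcases le_or_gt a r with h | h
  · calc max 0 (a - r) = 0 := max_eq_left (by linarith)
      _ ≤ _ := Finset.sum_nonneg hterm
  · by_cases hex : ∃ σ ∈ Q, cst P (insert σ C) (Finset.insert_nonempty σ C) i ≤ r
    · obtain ⟨σ0, hσ0, hb⟩ := hex
      have h0 : max 0 (cst P (insert σ0 C) (Finset.insert_nonempty σ0 C) i - r) = 0 :=
        max_eq_left (by linarith)
      calc max 0 (a - r)
          = max 0 (a - r) - max 0 (cst P (insert σ0 C) (Finset.insert_nonempty σ0 C) i - r) := by
            rw [h0]; ring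
        _ ≤ _ := Finset.single_le_sum hterm hσ0
    · push_neg at hex
      have hub : ∀ σ ∈ Q, max 0 (a - r) -
          max 0 (cst P (insert σ C) (Finset.insert_nonempty σ C) i - r)
          = a - cst P (insert σ C) (Finset.insert_nonempty σ C) i := by
        intro σ hσ
        have h1 := hex σ hσ
        rw [max_eq_right (by linarith : (0:ℝ) ≤ a - r),
          max_eq_right (by linarith : (0:ℝ) ≤ cst P (insert σ C) (Finset.insert_nonempty σ C) i - r)]
        ring
      rw [Finset.sum_congr rfl hub, max_eq_right (by linarith : (0:ℝ) ≤ a - r)]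
      have key := sum_decrease P C Q hC hQ i
      linarith

lemma exists_decrease [DecidableEq (Fin t → X)] (P : Fin t → Finset X) (r : ℝ)
    (C Q : Finset (Fin t → X)) (hC : C.Nonempty) (hQ : Q.Nonempty)
    (hQr : ∀ i, cst P Q hQ i ≤ r) (k : ℕ) (hk : 1 ≤ k) (hkQ : Q.card ≤ k) :
    ∃ σ ∈ Q, W P r (insert σ C) (Finset.insert_nonempty σ C) ≤
      (1 - 1 / (k : ℝ)) * W P r C hC := by
  have hsum : W P r C hC ≤
      ∑ σ ∈ Q, (W P r C hC - W P r (insert σ C) (Finset.insert_nonempty σ C)) := by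
    unfold W
    have hrw : ∀ σ ∈ Q,
        ((∑ i : Fin t, max 0 (cst P C hC i - r)) -
          ∑ i : Fin t, max 0 (cst P (insert σ C) (Finset.insert_nonempty σ C) i - r))
        = ∑ i : Fin t, (max 0 (cst P C hC i - r) -
            max 0 (cst P (insert σ C) (Finset.insert_nonempty σ C) i - r)) := by
      intro σ _; rw [Finset.sum_sub_distrib]
    rw [Finset.sum_congr rfl hrw, Finset.sum_comm]
    exact Finset.sum_le_sum fun i _ => level_key P r C Q hC hQ i (hQr i)
  have havg : ∃ σ ∈ Q, W P r C hC / (Q.card : ℝ) ≤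
      W P r C hC - W P r (insert σ C) (Finset.insert_nonempty σ C) := by
    apply Finset.exists_le_of_sum_le hQ
    rw [Finset.sum_const, nsmul_eq_mul]
    rw [mul_div_cancel₀]
    · exact hsum
    · exact_mod_cast Finset.card_ne_zero_of_mem hQ.choose_spec
  obtain ⟨σ, hσ, hle⟩ := havg
  refine ⟨σ, hσ, ?_⟩
  have hQpos : (0:ℝ) < Q.card := by exact_mod_cast hQ.card_pos
  have hdiv : W P r C hC / (k : ℝ) ≤ W P r C hC / (Q.card : ℝ) :=
    div_le_div_of_nonneg_left (W_nonneg P r C hC) hQpos (by exact_mod_cast hkQ)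
  have hkpos : (0:ℝ) < k := by exact_mod_cast hk
  have : W P r (insert σ C) (Finset.insert_nonempty σ C) ≤
      W P r C hC - W P r C hC / (k : ℝ) := by linarith
  calc W P r (insert σ C) (Finset.insert_nonempty σ C)
      ≤ W P r C hC - W P r C hC / (k : ℝ) := this
    _ = (1 - 1 / (k : ℝ)) * W P r C hC := by ring

end S11

namespace S11

variable {X : Type*} [MetricSpace X] {t : ℕ}

lemma base_bound [DecidableEq (Fin t → X)] (P : Fin t → Finset X) (r Δ : ℝ) (hΔ : 0 ≤ Δ)
    (hdist : ∀ p q : X, (∃ i, p ∈ P i) → (∃ i, q ∈ P i) → p ≠ q →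
      1 ≤ dist p q ∧ dist p q ≤ Δ)
    (Q : Finset (Fin t → X)) (hQ : Q.Nonempty)
    (hQt : ∀ τ ∈ Q, IsTrajectory P τ)
    (hQr : ∀ i, cst P Q hQ i ≤ r)
    (τ0 : Fin t → X) (hτ0 : τ0 ∈ Q) :
    W P r {τ0} (Finset.singleton_nonempty τ0) ≤ ∑ i : Fin t, ((P i).card : ℝ) * Δ := by
  refine Finset.sum_le_sum fun i _ => ?_
  have hc : cst P {τ0} (Finset.singleton_nonempty τ0) i ≤ cst P Q hQ i + ((P i).card : ℝ) * Δ := by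
    unfold cst
    have hp : ∀ p ∈ P i, Finset.inf' ({τ0} : Finset (Fin t → X)) (Finset.singleton_nonempty τ0) (fun τ => dist p (τ i))
        ≤ Q.inf' hQ (fun τ => dist p (τ i)) + Δ := by
      intro p hp
      rw [Finset.inf'_singleton]
      obtain ⟨σs, hσs, hmin⟩ := Finset.exists_mem_eq_inf' hQ (fun τ => dist p (τ i))
      rw [hmin]
      have htri : dist p (τ0 i) ≤ dist p (σs i) + dist (σs i) (τ0 i) := dist_triangle _ _ _
      have hd : dist (σs i) (τ0 i) ≤ Δ := by
        by_cases heq : σs i = τ0 i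
        · rw [heq, dist_self]; exact hΔ
        · exact (hdist _ _ ⟨i, hQt σs hσs i⟩ ⟨i, hQt τ0 hτ0 i⟩ heq).2
      linarith
    calc ∑ p ∈ P i, Finset.inf' ({τ0} : Finset (Fin t → X)) (Finset.singleton_nonempty τ0) (fun τ => dist p (τ i))
        ≤ ∑ p ∈ P i, (Q.inf' hQ (fun τ => dist p (τ i)) + Δ) := Finset.sum_le_sum hp
      _ = (∑ p ∈ P i, Q.inf' hQ (fun τ => dist p (τ i))) + ((P i).card : ℝ) * Δ := by
          rw [Finset.sum_add_distrib, Finset.sum_const, nsmul_eq_mul]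
  have h1 := hQr i
  exact max_le (by positivity) (by linarith)

lemma iterate [DecidableEq (Fin t → X)] (P : Fin t → Finset X) (r : ℝ)
    (Q : Finset (Fin t → X)) (hQ : Q.Nonempty) (hQr : ∀ i, cst P Q hQ i ≤ r)
    (k : ℕ) (hk : 1 ≤ k) (hkQ : Q.card ≤ k)
    (B : ℝ) (τ0 : Fin t → X) (hτ0 : τ0 ∈ Q)
    (hB : W P r {τ0} (Finset.singleton_nonempty τ0) ≤ B) (hB0 : 0 ≤ B) :
    ∀ m : ℕ, ∃ (C : Finset (Fin t → X)) (hC : C.Nonempty),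
      C ⊆ Q ∧ C.card ≤ m + 1 ∧ W P r C hC ≤ (1 - 1 / (k : ℝ)) ^ m * B := by
  have hknn : (0:ℝ) ≤ 1 - 1 / (k : ℝ) := by
    have : (1:ℝ) ≤ (k : ℝ) := by exact_mod_cast hk
    have h0 : (0:ℝ) < (k:ℝ) := by linarith
    have : 1 / (k:ℝ) ≤ 1 := by
      rw [div_le_one h0]; exact this
    linarith
  intro m
  induction m with
  | zero =>
    exact ⟨{τ0}, Finset.singleton_nonempty τ0, Finset.singleton_subset_iff.mpr hτ0,
      le_rfl, by rw [pow_zero, one_mul]; exact hB⟩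
  | succ m ih =>
    obtain ⟨C, hC, hsub, hcard, hW⟩ := ih
    obtain ⟨σ, hσ, hdec⟩ := exists_decrease P r C Q hC hQ hQr k hk hkQ
    refine ⟨insert σ C, Finset.insert_nonempty σ C, Finset.insert_subset hσ hsub, ?_, ?_⟩
    · calc (insert σ C).card ≤ C.card + 1 := Finset.card_insert_le σ C
        _ ≤ m + 1 + 1 := by omega
    · calc W P r (insert σ C) (Finset.insert_nonempty σ C)
          ≤ (1 - 1 / (k : ℝ)) * W P r C hC := hdec
        _ ≤ (1 - 1 / (k : ℝ)) * ((1 - 1 / (k : ℝ)) ^ m * B) :=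
            mul_le_mul_of_nonneg_left hW hknn
        _ = (1 - 1 / (k : ℝ)) ^ (m + 1) * B := by ring

end S11

lemma levelCost_coe' {X : Type*} [MetricSpace X] {t : ℕ} (P : Fin t → Finset X)
    (C : Finset (Fin t → X)) (hC : C.Nonempty) (i : Fin t) :
    levelCost P (↑C) i = S11.cst P C hC i := by
  refine Finset.sum_congr rfl fun p _ => ?_
  rw [Finset.inf'_eq_csInf_image, iInf]
  congr 1
  ext x
  simp only [Set.mem_range, Set.mem_image, Finset.mem_coe, Subtype.exists, Finset.coe_sort_coe]
  constructor
  · rintro ⟨τ, hτ, rfl⟩; exact ⟨τ, hτ, rfl⟩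
  · rintro ⟨τ, hτ, rfl⟩; exact ⟨τ, hτ, rfl⟩


/-- let `P` have size `n`, with all pairwise distances of distinct points
appearing in `P` lying in `[1, Δ]`.  Let `0 < ε ≤ nΔ`, `r ≥ 1`, `δ ≥ 0`, `k ≥ 1`.  If
`P` admits a temporal `(k,r,δ)`-median-clustering, then it admits a temporal
`(1 + ⌈k · ln(nΔ/ε)⌉, (1+ε)r, δ)`-median-clustering. -/
theorem statement11 {X : Type*} [MetricSpace X] {t : ℕ} (P : Fin t → Finset X)
    (hP : ∀ i, (P i).Nonempty)
    (n : ℕ) (hn : n = ∑ i, (P i).card) (Δ : ℝ)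
    (hdist : ∀ p q : X, (∃ i, p ∈ P i) → (∃ i, q ∈ P i) → p ≠ q →
      1 ≤ dist p q ∧ dist p q ≤ Δ)
    (ε : ℝ) (hε : 0 < ε) (hεn : ε ≤ (n : ℝ) * Δ)
    (r δ : ℝ) (hr : 1 ≤ r) (hδ : 0 ≤ δ) (k : ℕ) (hk : 1 ≤ k)
    (hclus : ∃ 𝒬 : Set (Fin t → X), IsTemporalMedianClustering P 𝒬 k r δ) :
    ∃ 𝒞 : Set (Fin t → X),
      IsTemporalMedianClustering P 𝒞 (1 + ⌈(k : ℝ) * Real.log ((n : ℝ) * Δ / ε)⌉₊)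
        ((1 + ε) * r) δ := by
  classical
  obtain ⟨𝒬, hne, hfin, hcard, htraj, hrad, hdisp⟩ := hclus
  set Q := hfin.toFinset with hQdef
  have hQcoe : (↑Q : Set (Fin t → X)) = 𝒬 := hfin.coe_toFinset
  have hQne : Q.Nonempty := by
    rw [← Finset.coe_nonempty, hQcoe]; exact hne
  have hQr : ∀ i, S11.cst P Q hQne i ≤ r := by
    intro i
    have h := hrad i
    rw [← hQcoe, levelCost_coe' P Q hQne i] at h
    exact h
  have hQt : ∀ τ ∈ Q, IsTrajectory P τ := fun τ hτ => htraj τ (hfin.mem_toFinset.mp hτ)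
  have hQcard : Q.card ≤ k := by
    rw [← Set.ncard_coe_finset, hQcoe]; exact hcard
  have hnΔpos : (0:ℝ) < (n : ℝ) * Δ := lt_of_lt_of_le hε hεn
  have hΔ : (0:ℝ) ≤ Δ := by nlinarith [Nat.cast_nonneg (α := ℝ) n]
  obtain ⟨τ0, hτ0Q⟩ := hQne.exists_mem
  have hbase := S11.base_bound P r Δ hΔ hdist Q hQne hQt hQr τ0 hτ0Q
  have hBsum : ∑ i : Fin t, ((P i).card : ℝ) * Δ = (n : ℝ) * Δ := by
    rw [← Finset.sum_mul]
    congr 1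
    rw [hn]
    push_cast
    rfl
  rw [hBsum] at hbase
  set m := ⌈(k : ℝ) * Real.log ((n : ℝ) * Δ / ε)⌉₊ with hm
  obtain ⟨C, hC, hsub, hcardC, hW⟩ := S11.iterate P r Q hQne hQr k hk hQcard
    ((n : ℝ) * Δ) τ0 hτ0Q hbase (le_of_lt hnΔpos) m
  -- the geometric bound
  have hkpos : (0:ℝ) < (k : ℝ) := by exact_mod_cast hk
  have hknn : (0:ℝ) ≤ 1 - 1 / (k : ℝ) := by
    have h1 : 1 / (k:ℝ) ≤ 1 := by
      rw [div_le_one hkpos]; exact_mod_cast hk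
    linarith
  have hy : (1:ℝ) ≤ (n : ℝ) * Δ / ε := (one_le_div hε).mpr hεn
  have hypos : (0:ℝ) < (n : ℝ) * Δ / ε := by positivity
  set L := Real.log ((n : ℝ) * Δ / ε) with hL
  have hLnn : 0 ≤ L := Real.log_nonneg hy
  have h1 : 1 - 1 / (k : ℝ) ≤ Real.exp (-(1 / (k : ℝ))) := by
    have := Real.add_one_le_exp (-(1 / (k : ℝ)))
    linarith
  have hpow : (1 - 1 / (k : ℝ)) ^ m ≤ Real.exp (-(1 / (k : ℝ))) ^ m :=
    pow_le_pow_left₀ hknn h1 m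
  have hexp1 : Real.exp (-(1 / (k : ℝ))) ^ m = Real.exp ((m : ℝ) * -(1 / (k : ℝ))) :=
    (Real.exp_nat_mul _ m).symm
  have hmk : (k : ℝ) * L ≤ (m : ℝ) := Nat.le_ceil _
  have harg : (m : ℝ) * -(1 / (k : ℝ)) ≤ -L := by
    rw [neg_le_neg_iff.symm] at hmk
    have : L ≤ (m : ℝ) / (k : ℝ) := by
      rw [le_div_iff₀ hkpos]
      linarith [Nat.le_ceil ((k : ℝ) * L)]
    have hrw : (m : ℝ) * -(1 / (k : ℝ)) = -((m : ℝ) / (k : ℝ)) := by ring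
    rw [hrw]
    linarith
  have hexp2 : Real.exp ((m : ℝ) * -(1 / (k : ℝ))) ≤ Real.exp (-L) := Real.exp_le_exp.mpr harg
  have hexp3 : Real.exp (-L) = ε / ((n : ℝ) * Δ) := by
    rw [Real.exp_neg, hL, Real.exp_log hypos]
    rw [inv_div]
  have hgeo : (1 - 1 / (k : ℝ)) ^ m * ((n : ℝ) * Δ) ≤ ε := by
    have hc : (1 - 1 / (k : ℝ)) ^ m ≤ ε / ((n : ℝ) * Δ) := by
      rw [← hexp3]
      calc (1 - 1 / (k : ℝ)) ^ m ≤ Real.exp (-(1 / (k : ℝ))) ^ m := hpow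
        _ = Real.exp ((m : ℝ) * -(1 / (k : ℝ))) := hexp1
        _ ≤ Real.exp (-L) := hexp2
    calc (1 - 1 / (k : ℝ)) ^ m * ((n : ℝ) * Δ)
        ≤ (ε / ((n : ℝ) * Δ)) * ((n : ℝ) * Δ) :=
          mul_le_mul_of_nonneg_right hc (le_of_lt hnΔpos)
      _ = ε := div_mul_cancel₀ ε (ne_of_gt hnΔpos)
  have hWε : S11.W P r C hC ≤ ε := le_trans hW hgeo
  refine ⟨↑C, Finset.coe_nonempty.mpr hC, C.finite_toSet, ?_, ?_, ?_, ?_⟩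
  · rw [Set.ncard_coe_finset]
    omega
  · intro τ hτ
    exact hQt τ (hsub hτ)
  · intro i
    rw [levelCost_coe' P C hC i]
    have h1 := S11.max_le_W P r C hC i
    have h2 : S11.cst P C hC i - r ≤ max 0 (S11.cst P C hC i - r) := le_max_right _ _
    nlinarith
  · intro τ hτ
    exact hdisp τ (hfin.mem_toFinset.mp (hsub hτ))
end

section
/- Let P be a temporal-sampling of length t in a metric space (X,d) and fix r ≥ 0. The set function −W₂ is submodular: for all nonempty finite sets 𝒜 ⊆ ℬ of trajectories of P and every trajectory τ of P, W₂(𝒜) − W₂(𝒜 ∪ {τ}) ≥ W₂(ℬ) − W₂(ℬ ∪ {τ}). -/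
/-- `cost₂(i;𝒞) = Σ_{p ∈ P i} min_{τ ∈ 𝒞} d(p, τ i)²`, the level-`i` means cost of the
set of trajectories `𝒞` (the infimum is the minimum for `𝒞` finite and nonempty). -/
noncomputable def levelCost2 {X : Type*} [MetricSpace X] {t : ℕ} (P : Fin t → Finset X)
    (𝒞 : Set (Fin t → X)) (i : Fin t) : ℝ :=
  ∑ p ∈ P i, ⨅ τ : 𝒞, (dist p ((τ : Fin t → X) i)) ^ 2

/-- `𝒞` is a temporal `(k,r,δ)`-means-clustering of `P`: a nonempty finite set of at
most `k` trajectories of `P` with `rad₂(𝒞) ≤ r` and `δ(𝒞) ≤ δ`. -/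
def IsTemporalMeansClustering {X : Type*} [MetricSpace X] {t : ℕ} (P : Fin t → Finset X)
    (𝒞 : Set (Fin t → X)) (k : ℕ) (r δ : ℝ) : Prop :=
  𝒞.Nonempty ∧ 𝒞.Finite ∧ 𝒞.ncard ≤ k ∧
  (∀ τ ∈ 𝒞, IsTrajectory P τ) ∧
  (∀ i : Fin t, levelCost2 P 𝒞 i ≤ r) ∧
  (∀ τ ∈ 𝒞, DispLE τ δ)

/-- The potential `W₂(𝒞) = Σ_{i=1}^t max(0, cost₂(i;𝒞) − r)`. -/
noncomputable def Wpot2 {X : Type*} [MetricSpace X] {t : ℕ} (P : Fin t → Finset X)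
    (r : ℝ) (𝒞 : Set (Fin t → X)) : ℝ :=
  ∑ i : Fin t, max 0 (levelCost2 P 𝒞 i - r)


/-! Per level and per sample point `p`, the cost is the minimum over `𝒞` of `d(p, σ i)²`, and
adding `τ` replaces that minimum `m` by `min m c` with `c = d(p, τ i)²`. The decrease
`m - min m c = max 0 (m - c)` grows with `m`, hence shrinks as `𝒞` grows; summing over `p`,
`cost₂` is antitone with antitone marginal decrease. Finally `x ↦ max 0 (x - r)` is monotone and
convex, which carries this diminishing-returns property through the truncation. -/

open Finset

lemma max_zero_sub_sub_le_of_sub_le (r : ℝ) {a a' b b' : ℝ} (ha : a' ≤ a) (hba : b' ≤ a')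
    (hsub : b - b' ≤ a - a') :
    max 0 (b - r) - max 0 (b' - r) ≤ max 0 (a - r) - max 0 (a' - r) := by
  rcases max_cases 0 (a - r) with ⟨_, _⟩ | ⟨_, _⟩ <;>
  rcases max_cases 0 (a' - r) with ⟨_, _⟩ | ⟨_, _⟩ <;>
  rcases max_cases 0 (b - r) with ⟨_, _⟩ | ⟨_, _⟩ <;>
  rcases max_cases 0 (b' - r) with ⟨_, _⟩ | ⟨_, _⟩ <;>
  linarith

section InfImage

variable {α β : Type*} {g : α → β}

lemma csInf_image_union_singleton [ConditionallyCompleteLinearOrder β]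
    (hg : BddBelow (Set.range g)) {S : Set α} (hS : S.Nonempty) (x : α) :
    sInf (g '' (S ∪ {x})) = min (sInf (g '' S)) (g x) := by
  rw [Set.image_union, Set.image_singleton,
    csInf_union (hg.mono (Set.image_subset_range g S)) (hS.image g) bddBelow_singleton
      (Set.singleton_nonempty _), csInf_singleton]

lemma csInf_image_anti [ConditionallyCompleteLattice β] (hg : BddBelow (Set.range g))
    {A B : Set α} (hA : A.Nonempty) (hAB : A ⊆ B) : sInf (g '' B) ≤ sInf (g '' A) :=
  csInf_le_csInf (hg.mono (Set.image_subset_range g B)) (hA.image g) (Set.image_mono hAB)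

lemma csInf_image_sub_union_singleton_anti {g : α → ℝ} (hg : BddBelow (Set.range g))
    {A B : Set α} (hA : A.Nonempty) (hAB : A ⊆ B) (x : α) :
    sInf (g '' B) - sInf (g '' (B ∪ {x})) ≤ sInf (g '' A) - sInf (g '' (A ∪ {x})) := by
  rw [csInf_image_union_singleton hg (hA.mono hAB), csInf_image_union_singleton hg hA]
  have hBA := csInf_image_anti hg hA hAB
  rcases min_cases (sInf (g '' B)) (g x) with ⟨_, _⟩ | ⟨_, _⟩ <;>
  rcases min_cases (sInf (g '' A)) (g x) with ⟨_, _⟩ | ⟨_, _⟩ <;>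
  linarith

end InfImage

section LevelCost

variable {X : Type*} [MetricSpace X] {t : ℕ} (P : Fin t → Finset X) (i : Fin t)
  {𝒜 ℬ : Set (Fin t → X)}

lemma bddBelow_range_dist_sq (p : X) :
    BddBelow (Set.range fun σ : Fin t → X => dist p (σ i) ^ 2) :=
  ⟨0, by rintro _ ⟨σ, rfl⟩; positivity⟩

lemma levelCost2_eq_sum_csInf (𝒞 : Set (Fin t → X)) :
    levelCost2 P 𝒞 i = ∑ p ∈ P i, sInf ((fun σ : Fin t → X => dist p (σ i) ^ 2) '' 𝒞) := by
  simp only [levelCost2, Set.image_eq_range]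
  rfl

lemma levelCost2_anti (hA : 𝒜.Nonempty) (hAB : 𝒜 ⊆ ℬ) :
    levelCost2 P ℬ i ≤ levelCost2 P 𝒜 i := by
  rw [levelCost2_eq_sum_csInf, levelCost2_eq_sum_csInf]
  exact sum_le_sum fun p _ => csInf_image_anti (bddBelow_range_dist_sq i p) hA hAB

lemma levelCost2_sub_union_singleton_anti (hA : 𝒜.Nonempty) (hAB : 𝒜 ⊆ ℬ) (τ : Fin t → X) :
    levelCost2 P ℬ i - levelCost2 P (ℬ ∪ {τ}) i ≤
      levelCost2 P 𝒜 i - levelCost2 P (𝒜 ∪ {τ}) i := by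
  simp only [levelCost2_eq_sum_csInf, ← sum_sub_distrib]
  exact sum_le_sum fun p _ =>
    csInf_image_sub_union_singleton_anti (bddBelow_range_dist_sq i p) hA hAB τ

end LevelCost

theorem statement12_general {X : Type*} [MetricSpace X] {t : ℕ} (P : Fin t → Finset X)
    (r : ℝ)
    (𝒜 ℬ : Set (Fin t → X)) (hAB : 𝒜 ⊆ ℬ)
    (hA : 𝒜.Nonempty)
    (τ : Fin t → X) :
    Wpot2 P r ℬ - Wpot2 P r (ℬ ∪ {τ}) ≤ Wpot2 P r 𝒜 - Wpot2 P r (𝒜 ∪ {τ}) := by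
  simp only [Wpot2, ← sum_sub_distrib]
  refine sum_le_sum fun i _ => max_zero_sub_sub_le_of_sub_le r ?_ ?_
    (levelCost2_sub_union_singleton_anti P i hA hAB τ)
  · exact levelCost2_anti P i hA Set.subset_union_left
  · exact levelCost2_anti P i (hA.mono Set.subset_union_left) (Set.union_subset_union_left _ hAB)

/-- the set function `−W₂` is submodular: for nonempty finite sets
`𝒜 ⊆ ℬ` of trajectories of `P` and any trajectory `τ` of `P`,
`W₂(𝒜) − W₂(𝒜 ∪ {τ}) ≥ W₂(ℬ) − W₂(ℬ ∪ {τ})`. -/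
theorem statement12 {X : Type*} [MetricSpace X] {t : ℕ} (P : Fin t → Finset X)
    (hP : ∀ i, (P i).Nonempty) (r : ℝ) (hr : 0 ≤ r)
    (𝒜 ℬ : Set (Fin t → X)) (hAB : 𝒜 ⊆ ℬ)
    (hA : 𝒜.Nonempty) (hAfin : 𝒜.Finite) (hBfin : ℬ.Finite)
    (hBtraj : ∀ τ ∈ ℬ, IsTrajectory P τ)
    (τ : Fin t → X) (hτ : IsTrajectory P τ) :
    Wpot2 P r ℬ - Wpot2 P r (ℬ ∪ {τ}) ≤ Wpot2 P r 𝒜 - Wpot2 P r (𝒜 ∪ {τ}) :=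
  statement12_general P r 𝒜 ℬ hAB hA τ
end

section
/- Let P be a temporal-sampling of length t in a metric space (X,d) and fix r ≥ 0 and δ ≥ 0. If P admits a temporal (k,r,δ)-means-clustering with k ≥ 1, then for every nonempty finite set 𝒞 of trajectories of P there exists a trajectory σ of P with displacement δ(σ) ≤ δ such that W₂(𝒞 ∪ {σ}) ≤ (1 − 1/k) · W₂(𝒞). -/
section aux
variable {X : Type*} [MetricSpace X] {t : ℕ}

private lemma aux_bdd (p : X) (i : Fin t) (S : Set (Fin t → X)) :
    BddBelow (Set.range fun τ : S => (dist p ((τ : Fin t → X) i)) ^ 2) := by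
  refine ⟨0, ?_⟩
  rintro x ⟨τ, rfl⟩
  positivity

private lemma aux_inf_le (p : X) (i : Fin t) {S : Set (Fin t → X)} {τ : Fin t → X}
    (hτ : τ ∈ S) :
    (⨅ τ' : S, (dist p ((τ' : Fin t → X) i)) ^ 2) ≤ (dist p (τ i)) ^ 2 :=
  ciInf_le (aux_bdd p i S) ⟨τ, hτ⟩

private lemma aux_mono (p : X) (i : Fin t) {S T : Set (Fin t → X)}
    (hne : S.Nonempty) (hST : S ⊆ T) :
    (⨅ τ : T, (dist p ((τ : Fin t → X) i)) ^ 2)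
      ≤ ⨅ τ : S, (dist p ((τ : Fin t → X) i)) ^ 2 := by
  haveI := hne.to_subtype
  exact le_ciInf fun τ => aux_inf_le p i (hST τ.2)

private lemma aux_min (p : X) (i : Fin t) {S : Set (Fin t → X)}
    (hfin : S.Finite) (hne : S.Nonempty) :
    ∃ τ ∈ S, (⨅ τ' : S, (dist p ((τ' : Fin t → X) i)) ^ 2) = (dist p (τ i)) ^ 2 := by
  obtain ⟨τ₀, hτ₀, hmin⟩ := Set.exists_min_image S (fun τ => (dist p (τ i)) ^ 2) hfin hne
  refine ⟨τ₀, hτ₀, le_antisymm (aux_inf_le p i hτ₀) ?_⟩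
  haveI := hne.to_subtype
  exact le_ciInf fun τ => hmin τ τ.2

private lemma key_sum {ι : Type*} [DecidableEq ι] (Q : Finset ι) (hQ : Q.Nonempty)
    (a c r : ℝ) (hc : c ≤ r) (b : ι → ℝ) (hb : ∀ σ ∈ Q, b σ ≤ a)
    (hsum : a - c ≤ ∑ σ ∈ Q, (a - b σ)) :
    ∑ σ ∈ Q, max 0 (b σ - r) ≤ ((Q.card : ℝ) - 1) * max 0 (a - r) := by
  have hcard : (1 : ℝ) ≤ Q.card := by exact_mod_cast Finset.card_pos.2 hQ
  rcases le_or_gt a r with har | har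
  · have h0 : ∑ σ ∈ Q, max 0 (b σ - r) = 0 :=
      Finset.sum_eq_zero fun σ hσ => max_eq_left (by linarith [hb σ hσ])
    rw [h0]
    exact mul_nonneg (by linarith) (le_max_left _ _)
  · have hmax : max 0 (a - r) = a - r := max_eq_right (by linarith)
    by_cases hex : ∃ σ₀ ∈ Q, b σ₀ ≤ r
    · obtain ⟨σ₀, hσ₀, hbσ₀⟩ := hex
      rw [← Finset.add_sum_erase Q _ hσ₀, max_eq_left (by linarith)]
      have hle : ∑ σ ∈ Q.erase σ₀, max 0 (b σ - r) ≤ (Q.erase σ₀).card • (a - r) := by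
        apply Finset.sum_le_card_nsmul
        intro σ hσ
        have := hb σ (Finset.mem_of_mem_erase hσ)
        exact max_le (by linarith) (by linarith)
      rw [Finset.card_erase_of_mem hσ₀] at hle
      rw [zero_add, hmax]
      calc ∑ σ ∈ Q.erase σ₀, max 0 (b σ - r) ≤ (Q.card - 1) • (a - r) := hle
        _ = ((Q.card : ℝ) - 1) * (a - r) := by
            rw [nsmul_eq_mul]
            congr 1
            have : 1 ≤ Q.card := Finset.card_pos.2 hQ
            push_cast [Nat.cast_sub this]
            ring
    · push_neg at hex
      have heq : ∑ σ ∈ Q, max 0 (b σ - r) = ∑ σ ∈ Q, (b σ - r) :=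
        Finset.sum_congr rfl fun σ hσ => max_eq_right (by linarith [hex σ hσ])
      rw [heq, hmax]
      have h1 : ∑ σ ∈ Q, (a - b σ) = Q.card * a - ∑ σ ∈ Q, b σ := by
        rw [Finset.sum_sub_distrib, Finset.sum_const, nsmul_eq_mul]
      have h2 : ∑ σ ∈ Q, (b σ - r) = ∑ σ ∈ Q, b σ - Q.card * r := by
        rw [Finset.sum_sub_distrib, Finset.sum_const, nsmul_eq_mul]
      rw [h2]
      rw [h1] at hsum
      nlinarith

end aux

/-- if `P` admits a temporal `(k,r,δ)`-means-clustering with `k ≥ 1`, then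
for every nonempty finite set `𝒞` of trajectories of `P` there is a trajectory `σ` of
displacement at most `δ` with `W₂(𝒞 ∪ {σ}) ≤ (1 − 1/k) · W₂(𝒞)`. -/
theorem statement13 {X : Type*} [MetricSpace X] {t : ℕ} (P : Fin t → Finset X)
    (hP : ∀ i, (P i).Nonempty) (k : ℕ) (r δ : ℝ) (hr : 0 ≤ r) (hδ : 0 ≤ δ)
    (hk : 1 ≤ k)
    (hclus : ∃ 𝒬 : Set (Fin t → X), IsTemporalMeansClustering P 𝒬 k r δ)
    (𝒞 : Set (Fin t → X)) (h𝒞ne : 𝒞.Nonempty) (h𝒞fin : 𝒞.Finite)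
    (h𝒞traj : ∀ τ ∈ 𝒞, IsTrajectory P τ) :
    ∃ σ : Fin t → X, IsTrajectory P σ ∧ DispLE σ δ ∧
      Wpot2 P r (𝒞 ∪ {σ}) ≤ (1 - 1 / (k : ℝ)) * Wpot2 P r 𝒞 := by

  classical
  obtain ⟨𝒬, h𝒬ne, h𝒬fin, h𝒬card, h𝒬traj, h𝒬rad, h𝒬disp⟩ := hclus
  set Q : Finset (Fin t → X) := h𝒬fin.toFinset with hQdef
  have hQmem : ∀ σ, σ ∈ Q ↔ σ ∈ 𝒬 := fun σ => h𝒬fin.mem_toFinset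
  have hQne : Q.Nonempty := by
    obtain ⟨σ, hσ⟩ := h𝒬ne; exact ⟨σ, (hQmem σ).2 hσ⟩
  have hQcard : (Q.card : ℝ) ≤ (k : ℝ) := by
    have h : 𝒬.ncard = Q.card := Set.ncard_eq_toFinset_card 𝒬 h𝒬fin
    exact_mod_cast h ▸ h𝒬card
  have hWC0 : 0 ≤ Wpot2 P r 𝒞 := Finset.sum_nonneg fun i _ => le_max_left _ _
  -- per-level key inequality
  have key : ∀ i : Fin t,
      ∑ σ ∈ Q, max 0 (levelCost2 P (𝒞 ∪ {σ}) i - r)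
        ≤ ((Q.card : ℝ) - 1) * max 0 (levelCost2 P 𝒞 i - r) := by
    intro i
    apply key_sum Q hQne _ (levelCost2 P (𝒞 ∪ 𝒬) i) r
    · -- c ≤ r
      refine le_trans ?_ (h𝒬rad i)
      exact Finset.sum_le_sum fun p _ => aux_mono p i h𝒬ne Set.subset_union_right
    · intro σ hσ
      exact Finset.sum_le_sum fun p _ => aux_mono p i h𝒞ne Set.subset_union_left
    · -- a - c ≤ ∑ (a - b σ)
      have hpoint : ∀ p ∈ P i,
          (⨅ τ : 𝒞, (dist p ((τ : Fin t → X) i)) ^ 2)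
            - (⨅ τ : ↥(𝒞 ∪ 𝒬), (dist p ((τ : Fin t → X) i)) ^ 2)
          ≤ ∑ σ ∈ Q, ((⨅ τ : 𝒞, (dist p ((τ : Fin t → X) i)) ^ 2)
            - ⨅ τ : ↥(𝒞 ∪ {σ}), (dist p ((τ : Fin t → X) i)) ^ 2) := by
        intro p _
        have hterm_nonneg : ∀ σ ∈ Q,
            0 ≤ (⨅ τ : 𝒞, (dist p ((τ : Fin t → X) i)) ^ 2)
              - ⨅ τ : ↥(𝒞 ∪ {σ}), (dist p ((τ : Fin t → X) i)) ^ 2 :=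
          fun σ _ => sub_nonneg.2 (aux_mono p i h𝒞ne Set.subset_union_left)
        obtain ⟨τ₀, hτ₀, hEq⟩ := aux_min p i (h𝒞fin.union h𝒬fin) h𝒞ne.inl
        rcases hτ₀ with hτ₀ | hτ₀
        · have h1 : (⨅ τ : 𝒞, (dist p ((τ : Fin t → X) i)) ^ 2)
              ≤ ⨅ τ : ↥(𝒞 ∪ 𝒬), (dist p ((τ : Fin t → X) i)) ^ 2 := by
            rw [hEq]; exact aux_inf_le p i hτ₀
          exact le_trans (by linarith) (Finset.sum_nonneg hterm_nonneg)
        · have h2 : (⨅ τ : ↥(𝒞 ∪ {τ₀}), (dist p ((τ : Fin t → X) i)) ^ 2)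
              ≤ ⨅ τ : ↥(𝒞 ∪ 𝒬), (dist p ((τ : Fin t → X) i)) ^ 2 := by
            rw [hEq]
            exact aux_inf_le p i (Set.mem_union_right _ rfl)
          refine le_trans (by linarith) (Finset.single_le_sum hterm_nonneg ((hQmem τ₀).2 hτ₀))
      calc levelCost2 P 𝒞 i - levelCost2 P (𝒞 ∪ 𝒬) i
          = ∑ p ∈ P i, ((⨅ τ : 𝒞, (dist p ((τ : Fin t → X) i)) ^ 2)
              - ⨅ τ : ↥(𝒞 ∪ 𝒬), (dist p ((τ : Fin t → X) i)) ^ 2) := by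
            rw [Finset.sum_sub_distrib]; rfl
        _ ≤ ∑ p ∈ P i, ∑ σ ∈ Q, ((⨅ τ : 𝒞, (dist p ((τ : Fin t → X) i)) ^ 2)
              - ⨅ τ : ↥(𝒞 ∪ {σ}), (dist p ((τ : Fin t → X) i)) ^ 2) :=
            Finset.sum_le_sum hpoint
        _ = ∑ σ ∈ Q, ∑ p ∈ P i, ((⨅ τ : 𝒞, (dist p ((τ : Fin t → X) i)) ^ 2)
              - ⨅ τ : ↥(𝒞 ∪ {σ}), (dist p ((τ : Fin t → X) i)) ^ 2) := Finset.sum_comm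
        _ = ∑ σ ∈ Q, (levelCost2 P 𝒞 i - levelCost2 P (𝒞 ∪ {σ}) i) := by
            refine Finset.sum_congr rfl fun σ _ => ?_
            rw [Finset.sum_sub_distrib]; rfl
  -- sum over σ of W
  have hsumW : ∑ σ ∈ Q, Wpot2 P r (𝒞 ∪ {σ}) ≤ ((Q.card : ℝ) - 1) * Wpot2 P r 𝒞 := by
    unfold Wpot2
    rw [Finset.sum_comm, Finset.mul_sum]
    exact Finset.sum_le_sum fun i _ => key i
  have hk0 : (0 : ℝ) < k := by exact_mod_cast hk
  have hfrac : ((Q.card : ℝ) - 1) * Wpot2 P r 𝒞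
      ≤ ∑ _σ ∈ Q, ((1 - 1 / (k : ℝ)) * Wpot2 P r 𝒞) := by
    rw [Finset.sum_const, nsmul_eq_mul]
    have hdiv : (Q.card : ℝ) * (1 / k) ≤ 1 := by
      rw [mul_one_div, div_le_one hk0]; exact hQcard
    nlinarith [mul_nonneg (sub_nonneg.2 hdiv) hWC0]
  obtain ⟨σ, hσQ, hσle⟩ := Finset.exists_le_of_sum_le hQne (le_trans hsumW hfrac)
  have hσ𝒬 := (hQmem σ).1 hσQ
  exact ⟨σ, h𝒬traj σ hσ𝒬, h𝒬disp σ hσ𝒬, hσle⟩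
end

section
/- Let P be a temporal-sampling of length t and size n in a metric space (X,d) such that any two distinct points appearing in P are at distance at least 1 and at most Δ. Let ε > 0 with ε ≤ nΔ², let r ≥ 1, δ ≥ 0, and k ≥ 1. If P admits a temporal (k,r,δ)-means-clustering, then P admits a temporal (1 + ⌈k·ln(nΔ²/ε)⌉, (1+ε)r, δ)-means-clustering. -/
set_option maxHeartbeats 1000000

section AuxStatement14

variable {X : Type*} [MetricSpace X] {t : ℕ}

private lemma bdd_range14 (𝒞 : Set (Fin t → X)) (i : Fin t) (p : X) :
    BddBelow (Set.range fun τ : 𝒞 => (dist p ((τ : Fin t → X) i)) ^ 2) :=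
  ⟨0, by rintro x ⟨τ, rfl⟩; positivity⟩

private lemma g_nonneg14 (𝒞 : Set (Fin t → X)) (i : Fin t) (p : X) :
    0 ≤ ⨅ τ : 𝒞, (dist p ((τ : Fin t → X) i)) ^ 2 :=
  Real.iInf_nonneg fun τ => by positivity

private lemma g_le14 {𝒞 : Set (Fin t → X)} {σ : Fin t → X} (hσ : σ ∈ 𝒞) (i : Fin t) (p : X) :
    (⨅ τ : 𝒞, (dist p ((τ : Fin t → X) i)) ^ 2) ≤ (dist p (σ i)) ^ 2 :=
  ciInf_le (bdd_range14 𝒞 i p) ⟨σ, hσ⟩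

private lemma g_anti14 {𝒞 𝒟 : Set (Fin t → X)} (h𝒞 : 𝒞.Nonempty) (h : 𝒞 ⊆ 𝒟)
    (i : Fin t) (p : X) :
    (⨅ τ : 𝒟, (dist p ((τ : Fin t → X) i)) ^ 2) ≤ ⨅ τ : 𝒞, (dist p ((τ : Fin t → X) i)) ^ 2 := by
  haveI := h𝒞.to_subtype
  exact le_ciInf fun τ => ciInf_le (bdd_range14 𝒟 i p) ⟨τ, h τ.2⟩

private lemma cost_nonneg14 (P : Fin t → Finset X) (𝒞 : Set (Fin t → X)) (i : Fin t) :
    0 ≤ levelCost2 P 𝒞 i :=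
  Finset.sum_nonneg fun p _ => g_nonneg14 𝒞 i p

private lemma cost_anti14 (P : Fin t → Finset X) {𝒞 𝒟 : Set (Fin t → X)}
    (h𝒞 : 𝒞.Nonempty) (h : 𝒞 ⊆ 𝒟) (i : Fin t) :
    levelCost2 P 𝒟 i ≤ levelCost2 P 𝒞 i :=
  Finset.sum_le_sum fun p _ => g_anti14 h𝒞 h i p

/-- attainment of the infimum for a finite nonempty set of trajectories -/
private lemma g_attain14 {𝒬 : Set (Fin t → X)} (hne : 𝒬.Nonempty) (hfin : 𝒬.Finite)
    (i : Fin t) (p : X) :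
    ∃ σ ∈ 𝒬, (dist p (σ i)) ^ 2 ≤ ⨅ τ : 𝒬, (dist p ((τ : Fin t → X) i)) ^ 2 := by
  obtain ⟨σ, hσ, hmin⟩ := Set.exists_min_image 𝒬 (fun τ => (dist p (τ i)) ^ 2) hfin hne
  haveI := hne.to_subtype
  exact ⟨σ, hσ, le_ciInf fun τ => hmin τ τ.2⟩

/-- Core averaging inequality. -/
private lemma core14 (P : Fin t → Finset X) {𝒬 𝒞 : Set (Fin t → X)}
    (h𝒬ne : 𝒬.Nonempty) (h𝒬fin : 𝒬.Finite) (h𝒞ne : 𝒞.Nonempty) (i : Fin t) :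
    levelCost2 P 𝒞 i - levelCost2 P 𝒬 i ≤
      ∑ σ ∈ h𝒬fin.toFinset, (levelCost2 P 𝒞 i - levelCost2 P (𝒞 ∪ {σ}) i) := by
  have expand : ∀ σ : Fin t → X,
      levelCost2 P 𝒞 i - levelCost2 P (𝒞 ∪ {σ}) i =
      ∑ p ∈ P i, ((⨅ τ : 𝒞, (dist p ((τ : Fin t → X) i)) ^ 2)
        - ⨅ τ : (𝒞 ∪ {σ} : Set (Fin t → X)), (dist p ((τ : Fin t → X) i)) ^ 2) := by
    intro σ
    simp [levelCost2, Finset.sum_sub_distrib]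
  calc levelCost2 P 𝒞 i - levelCost2 P 𝒬 i
      = ∑ p ∈ P i, ((⨅ τ : 𝒞, (dist p ((τ : Fin t → X) i)) ^ 2)
          - ⨅ τ : 𝒬, (dist p ((τ : Fin t → X) i)) ^ 2) := by
        simp [levelCost2, Finset.sum_sub_distrib]
    _ ≤ ∑ p ∈ P i, ∑ σ ∈ h𝒬fin.toFinset,
          ((⨅ τ : 𝒞, (dist p ((τ : Fin t → X) i)) ^ 2)
            - ⨅ τ : (𝒞 ∪ {σ} : Set (Fin t → X)), (dist p ((τ : Fin t → X) i)) ^ 2) := by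
        apply Finset.sum_le_sum
        intro p _
        obtain ⟨σp, hσp, hσple⟩ := g_attain14 h𝒬ne h𝒬fin i p
        have hterm : (⨅ τ : 𝒞, (dist p ((τ : Fin t → X) i)) ^ 2)
            - (⨅ τ : 𝒬, (dist p ((τ : Fin t → X) i)) ^ 2)
            ≤ (⨅ τ : 𝒞, (dist p ((τ : Fin t → X) i)) ^ 2)
            - ⨅ τ : (𝒞 ∪ {σp} : Set (Fin t → X)), (dist p ((τ : Fin t → X) i)) ^ 2 := by
          have h1 : (⨅ τ : (𝒞 ∪ {σp} : Set (Fin t → X)), (dist p ((τ : Fin t → X) i)) ^ 2)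
              ≤ (dist p (σp i)) ^ 2 :=
            g_le14 (show σp ∈ 𝒞 ∪ {σp} from Set.mem_union_right _ rfl) i p
          exact sub_le_sub_left (h1.trans hσple) _
        refine le_trans hterm (Finset.single_le_sum (f := fun σ =>
          (⨅ τ : 𝒞, (dist p ((τ : Fin t → X) i)) ^ 2)
            - ⨅ τ : (𝒞 ∪ {σ} : Set (Fin t → X)), (dist p ((τ : Fin t → X) i)) ^ 2)
          (fun σ _ => ?_) (h𝒬fin.mem_toFinset.mpr hσp))
        exact sub_nonneg.mpr
          (g_anti14 h𝒞ne (Set.subset_union_left (t := ({σ} : Set (Fin t → X)))) i p)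
    _ = ∑ σ ∈ h𝒬fin.toFinset, (levelCost2 P 𝒞 i - levelCost2 P (𝒞 ∪ {σ}) i) := by
        rw [Finset.sum_comm]
        exact Finset.sum_congr rfl fun σ _ => (expand σ).symm

end AuxStatement14

section AuxStatement14b

variable {X : Type*} [MetricSpace X] {t : ℕ}

/-- Per-level potential inequality. -/
private lemma perlevel14 (P : Fin t → Finset X) (r : ℝ) {𝒬 𝒞 : Set (Fin t → X)}
    (h𝒬ne : 𝒬.Nonempty) (h𝒬fin : 𝒬.Finite) (h𝒬r : ∀ i, levelCost2 P 𝒬 i ≤ r)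
    (h𝒞ne : 𝒞.Nonempty) (i : Fin t) :
    max 0 (levelCost2 P 𝒞 i - r) ≤
      ∑ σ ∈ h𝒬fin.toFinset, (max 0 (levelCost2 P 𝒞 i - r)
        - max 0 (levelCost2 P (𝒞 ∪ {σ}) i - r)) := by
  set c := levelCost2 P 𝒞 i with hc
  have hmono : ∀ σ : Fin t → X, levelCost2 P (𝒞 ∪ {σ}) i ≤ c :=
    fun σ => cost_anti14 P h𝒞ne (Set.subset_union_left) i
  have hterm_nonneg : ∀ σ ∈ h𝒬fin.toFinset,
      0 ≤ max 0 (c - r) - max 0 (levelCost2 P (𝒞 ∪ {σ}) i - r) := by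
    intro σ _
    have := hmono σ
    have : max 0 (levelCost2 P (𝒞 ∪ {σ}) i - r) ≤ max 0 (c - r) :=
      max_le_max le_rfl (by linarith)
    linarith
  rcases le_or_gt c r with hcr | hcr
  · refine le_trans (le_of_eq (max_eq_left (by linarith))) (Finset.sum_nonneg ?_)
    intro σ _
    have h1 := hmono σ
    rw [show max 0 (levelCost2 P (𝒞 ∪ {σ}) i - r) = 0 from max_eq_left (by linarith),
      show max 0 (c - r) = 0 from max_eq_left (by linarith)]
    simp
  · by_cases hex : ∃ σ₀ ∈ h𝒬fin.toFinset, levelCost2 P (𝒞 ∪ {σ₀}) i ≤ r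
    · obtain ⟨σ₀, hσ₀mem, hσ₀⟩ := hex
      have h0 : max 0 (c - r) - max 0 (levelCost2 P (𝒞 ∪ {σ₀}) i - r) = max 0 (c - r) := by
        rw [show max 0 (levelCost2 P (𝒞 ∪ {σ₀}) i - r) = 0 from max_eq_left (by linarith)]
        ring
      calc max 0 (c - r)
          = max 0 (c - r) - max 0 (levelCost2 P (𝒞 ∪ {σ₀}) i - r) := h0.symm
        _ ≤ _ := Finset.single_le_sum hterm_nonneg hσ₀mem
    · push_neg at hex
      have hcore := core14 P h𝒬ne h𝒬fin h𝒞ne i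
      have hQr := h𝒬r i
      have heq : ∀ σ ∈ h𝒬fin.toFinset,
          max 0 (c - r) - max 0 (levelCost2 P (𝒞 ∪ {σ}) i - r)
          = c - levelCost2 P (𝒞 ∪ {σ}) i := by
        intro σ hσ
        have h1 := hex σ hσ
        rw [max_eq_right (by linarith), max_eq_right (by linarith)]
        ring
      rw [Finset.sum_congr rfl heq, max_eq_right (by linarith)]
      calc c - r ≤ c - levelCost2 P 𝒬 i := by linarith
        _ ≤ _ := hcore

/-- Step lemma: adding a well-chosen trajectory of `𝒬` shrinks the potential. -/
private lemma step14 (P : Fin t → Finset X) (r : ℝ) {𝒬 𝒞 : Set (Fin t → X)}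
    (h𝒬ne : 𝒬.Nonempty) (h𝒬fin : 𝒬.Finite) (h𝒬r : ∀ i, levelCost2 P 𝒬 i ≤ r)
    (h𝒞ne : 𝒞.Nonempty) :
    ∃ σ ∈ 𝒬, Wpot2 P r (𝒞 ∪ {σ}) ≤ (1 - 1 / (𝒬.ncard : ℝ)) * Wpot2 P r 𝒞 := by
  set Q := h𝒬fin.toFinset with hQ
  have hQne : Q.Nonempty := by
    rwa [hQ, Set.Finite.toFinset_nonempty]
  have hQcard : Q.card = 𝒬.ncard := (Set.ncard_eq_toFinset_card 𝒬 h𝒬fin).symm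
  have hK0 : (0 : ℝ) < (𝒬.ncard : ℝ) := by
    have := (Set.ncard_pos h𝒬fin).mpr h𝒬ne
    exact_mod_cast this
  set W := Wpot2 P r 𝒞 with hW
  have hsum : ∑ σ ∈ Q, (W / (𝒬.ncard : ℝ)) ≤
      ∑ σ ∈ Q, (W - Wpot2 P r (𝒞 ∪ {σ})) := by
    have lhs : ∑ σ ∈ Q, (W / (𝒬.ncard : ℝ)) = W := by
      rw [Finset.sum_const, hQcard, nsmul_eq_mul, mul_div_cancel₀ _ (ne_of_gt hK0)]
    rw [lhs]
    have : ∑ σ ∈ Q, (W - Wpot2 P r (𝒞 ∪ {σ}))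
        = ∑ i : Fin t, ∑ σ ∈ Q, (max 0 (levelCost2 P 𝒞 i - r)
            - max 0 (levelCost2 P (𝒞 ∪ {σ}) i - r)) := by
      rw [Finset.sum_comm]
      refine Finset.sum_congr rfl fun σ _ => ?_
      simp [hW, Wpot2, Finset.sum_sub_distrib]
    rw [this, hW, Wpot2]
    exact Finset.sum_le_sum fun i _ => perlevel14 P r h𝒬ne h𝒬fin h𝒬r h𝒞ne i
  obtain ⟨σ, hσQ, hσ⟩ := Finset.exists_le_of_sum_le hQne hsum
  refine ⟨σ, (Set.Finite.mem_toFinset h𝒬fin).mp hσQ, ?_⟩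
  have : (1 - 1 / (𝒬.ncard : ℝ)) * W = W - W / (𝒬.ncard : ℝ) := by
    field_simp
  linarith

/-- Iteration lemma. -/
private lemma iterate14 (P : Fin t → Finset X) (r : ℝ) {𝒬 : Set (Fin t → X)}
    (h𝒬ne : 𝒬.Nonempty) (h𝒬fin : 𝒬.Finite) (h𝒬r : ∀ i, levelCost2 P 𝒬 i ≤ r)
    {τ₀ : Fin t → X} (hτ₀ : τ₀ ∈ 𝒬) (s : ℕ) :
    ∃ 𝒞 : Set (Fin t → X), 𝒞 ⊆ 𝒬 ∧ 𝒞.Nonempty ∧ 𝒞.ncard ≤ 1 + s ∧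
      Wpot2 P r 𝒞 ≤ (1 - 1 / (𝒬.ncard : ℝ)) ^ s * Wpot2 P r {τ₀} := by
  induction s with
  | zero =>
    exact ⟨{τ₀}, Set.singleton_subset_iff.mpr hτ₀, Set.singleton_nonempty _,
      by simp, by simp⟩
  | succ s ih =>
    obtain ⟨𝒞, h𝒞sub, h𝒞ne, h𝒞card, h𝒞W⟩ := ih
    obtain ⟨σ, hσ𝒬, hσ⟩ := step14 P r h𝒬ne h𝒬fin h𝒬r h𝒞ne
    have h𝒞fin : 𝒞.Finite := h𝒬fin.subset h𝒞sub
    refine ⟨𝒞 ∪ {σ}, Set.union_subset h𝒞sub (Set.singleton_subset_iff.mpr hσ𝒬),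
      h𝒞ne.mono Set.subset_union_left, ?_, ?_⟩
    · calc (𝒞 ∪ {σ}).ncard ≤ 𝒞.ncard + ({σ} : Set (Fin t → X)).ncard :=
          Set.ncard_union_le _ _
        _ ≤ (1 + s) + 1 := by simpa using h𝒞card
        _ = 1 + (s + 1) := by ring
    · have hK1 : (1 : ℝ) ≤ (𝒬.ncard : ℝ) := by
        have := (Set.ncard_pos h𝒬fin).mpr h𝒬ne
        exact_mod_cast this
      have hb0 : (0 : ℝ) ≤ 1 - 1 / (𝒬.ncard : ℝ) := by
        have : 1 / (𝒬.ncard : ℝ) ≤ 1 := by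
          rw [div_le_one (by linarith)]; exact hK1
        linarith
      calc Wpot2 P r (𝒞 ∪ {σ}) ≤ (1 - 1 / (𝒬.ncard : ℝ)) * Wpot2 P r 𝒞 := hσ
        _ ≤ (1 - 1 / (𝒬.ncard : ℝ)) * ((1 - 1 / (𝒬.ncard : ℝ)) ^ s * Wpot2 P r {τ₀}) :=
          mul_le_mul_of_nonneg_left h𝒞W hb0
        _ = (1 - 1 / (𝒬.ncard : ℝ)) ^ (s + 1) * Wpot2 P r {τ₀} := by ring

end AuxStatement14b

/-- let `P` have size `n`, with all pairwise distances of distinct points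
appearing in `P` lying in `[1, Δ]`.  Let `0 < ε ≤ nΔ²`, `r ≥ 1`, `δ ≥ 0`, `k ≥ 1`.  If
`P` admits a temporal `(k,r,δ)`-means-clustering, then it admits a temporal
`(1 + ⌈k · ln(nΔ²/ε)⌉, (1+ε)r, δ)`-means-clustering. -/
theorem statement14 {X : Type*} [MetricSpace X] {t : ℕ} (P : Fin t → Finset X)
    (hP : ∀ i, (P i).Nonempty)
    (n : ℕ) (hn : n = ∑ i, (P i).card) (Δ : ℝ)
    (hdist : ∀ p q : X, (∃ i, p ∈ P i) → (∃ i, q ∈ P i) → p ≠ q →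
      1 ≤ dist p q ∧ dist p q ≤ Δ)
    (ε : ℝ) (hε : 0 < ε) (hεn : ε ≤ (n : ℝ) * Δ ^ 2)
    (r δ : ℝ) (hr : 1 ≤ r) (hδ : 0 ≤ δ) (k : ℕ) (hk : 1 ≤ k)
    (hclus : ∃ 𝒬 : Set (Fin t → X), IsTemporalMeansClustering P 𝒬 k r δ) :
    ∃ 𝒞 : Set (Fin t → X),
      IsTemporalMeansClustering P 𝒞 (1 + ⌈(k : ℝ) * Real.log ((n : ℝ) * Δ ^ 2 / ε)⌉₊)
        ((1 + ε) * r) δ := by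
  obtain ⟨𝒬, h𝒬ne, h𝒬fin, h𝒬card, h𝒬traj, h𝒬r, h𝒬disp⟩ := hclus
  obtain ⟨τ₀, hτ₀⟩ := h𝒬ne
  have h𝒬ne : 𝒬.Nonempty := ⟨τ₀, hτ₀⟩
  set A : ℝ := (n : ℝ) * Δ ^ 2 with hA
  have hA0 : 0 < A := lt_of_lt_of_le hε hεn
  set s := ⌈(k : ℝ) * Real.log (A / ε)⌉₊ with hs
  obtain ⟨𝒞, h𝒞sub, h𝒞ne, h𝒞card, h𝒞W⟩ := iterate14 P r h𝒬ne h𝒬fin h𝒬r hτ₀ s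
  -- bound on the initial potential
  have hΔ2 : ∀ i : Fin t, ∀ p ∈ P i, (dist p (τ₀ i)) ^ 2 ≤ Δ ^ 2 := by
    intro i p hp
    by_cases hpe : p = τ₀ i
    · rw [hpe]
      simpa using sq_nonneg Δ
    · have hd := hdist p (τ₀ i) ⟨i, hp⟩ ⟨i, h𝒬traj τ₀ hτ₀ i⟩ hpe
      exact pow_le_pow_left₀ dist_nonneg hd.2 2
  have hW0 : Wpot2 P r ({τ₀} : Set (Fin t → X)) ≤ A := by
    have hcost : ∀ i, levelCost2 P ({τ₀} : Set (Fin t → X)) i ≤ ((P i).card : ℝ) * Δ ^ 2 := by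
      intro i
      calc levelCost2 P ({τ₀} : Set (Fin t → X)) i ≤ ∑ p ∈ P i, Δ ^ 2 :=
            Finset.sum_le_sum fun p hp =>
              le_trans (g_le14 (Set.mem_singleton τ₀) i p) (hΔ2 i p hp)
        _ = ((P i).card : ℝ) * Δ ^ 2 := by rw [Finset.sum_const, nsmul_eq_mul]
    calc Wpot2 P r ({τ₀} : Set (Fin t → X)) ≤ ∑ i : Fin t, ((P i).card : ℝ) * Δ ^ 2 := by
          refine Finset.sum_le_sum fun i _ => max_le (by positivity) ?_
          have h1 := hcost i
          linarith
      _ = A := by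
          rw [hA, hn, ← Finset.sum_mul]
          push_cast
          ring
  -- numeric estimates
  have hK1 : 1 ≤ 𝒬.ncard := (Set.ncard_pos h𝒬fin).mpr h𝒬ne
  have hK0 : (0 : ℝ) < (𝒬.ncard : ℝ) := by exact_mod_cast hK1
  have hk0 : (0 : ℝ) < (k : ℝ) := by exact_mod_cast hk
  have hx1 : (1 : ℝ) ≤ A / ε := (one_le_div hε).mpr hεn
  have hxpos : (0 : ℝ) < A / ε := div_pos hA0 hε
  have hks : (k : ℝ) * Real.log (A / ε) ≤ (s : ℝ) := Nat.le_ceil _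
  have hb0 : (0 : ℝ) ≤ 1 - 1 / (𝒬.ncard : ℝ) := by
    have : 1 / (𝒬.ncard : ℝ) ≤ 1 := by
      rw [div_le_one hK0]
      exact_mod_cast hK1
    linarith
  have hb0k : (0 : ℝ) ≤ 1 - 1 / (k : ℝ) := by
    have : 1 / (k : ℝ) ≤ 1 := by
      rw [div_le_one hk0]
      exact_mod_cast hk
    linarith
  have h1 : (1 - 1 / (𝒬.ncard : ℝ)) ≤ 1 - 1 / (k : ℝ) := by
    have hKk : (𝒬.ncard : ℝ) ≤ (k : ℝ) := by exact_mod_cast h𝒬card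
    have := one_div_le_one_div_of_le hK0 hKk
    linarith
  have h2 : (1 - 1 / (𝒬.ncard : ℝ)) ^ s ≤ (1 - 1 / (k : ℝ)) ^ s := pow_le_pow_left₀ hb0 h1 s
  have h3 : (1 - 1 / (k : ℝ)) ≤ Real.exp (-(1 / (k : ℝ))) := by
    have := Real.add_one_le_exp (-(1 / (k : ℝ)))
    linarith
  have h4 : (1 - 1 / (k : ℝ)) ^ s ≤ Real.exp (-(1 / (k : ℝ))) ^ s := pow_le_pow_left₀ hb0k h3 s
  have h5 : Real.exp (-(1 / (k : ℝ))) ^ s = Real.exp (-((s : ℝ) / (k : ℝ))) := by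
    rw [← Real.exp_nat_mul]
    ring_nf
  have h6 : Real.exp (-((s : ℝ) / (k : ℝ))) ≤ Real.exp (-(Real.log (A / ε))) := by
    apply Real.exp_le_exp.mpr
    rw [neg_le_neg_iff, le_div_iff₀ hk0]
    linarith
  have h7 : Real.exp (-(Real.log (A / ε))) = ε / A := by
    rw [Real.exp_neg, Real.exp_log hxpos, inv_div]
  have hW0nn : 0 ≤ Wpot2 P r ({τ₀} : Set (Fin t → X)) :=
    Finset.sum_nonneg fun i _ => le_max_left _ _
  have hWfin : Wpot2 P r 𝒞 ≤ ε := by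
    have hstep1 : (1 - 1 / (𝒬.ncard : ℝ)) ^ s * Wpot2 P r ({τ₀} : Set (Fin t → X))
        ≤ Real.exp (-((s : ℝ) / (k : ℝ))) * A :=
      mul_le_mul ((h2.trans h4).trans_eq h5) hW0 hW0nn (Real.exp_nonneg _)
    have hstep2 : Real.exp (-((s : ℝ) / (k : ℝ))) * A ≤ (ε / A) * A :=
      mul_le_mul_of_nonneg_right (h6.trans_eq h7) hA0.le
    have hstep3 : (ε / A) * A = ε := div_mul_cancel₀ ε (ne_of_gt hA0)
    linarith
  -- assemble the clustering
  refine ⟨𝒞, h𝒞ne, h𝒬fin.subset h𝒞sub, h𝒞card, fun τ hτ => h𝒬traj τ (h𝒞sub hτ), ?_,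
    fun τ hτ => h𝒬disp τ (h𝒞sub hτ)⟩
  intro i
  have hEi : levelCost2 P 𝒞 i - r ≤ max 0 (levelCost2 P 𝒞 i - r) := le_max_right _ _
  have hEW : max 0 (levelCost2 P 𝒞 i - r) ≤ Wpot2 P r 𝒞 :=
    Finset.single_le_sum (f := fun j => max 0 (levelCost2 P 𝒞 j - r))
      (fun j _ => le_max_left _ _) (Finset.mem_univ i)
  have hεr : ε ≤ ε * r := le_mul_of_one_le_right hε.le hr
  have hexp : (1 + ε) * r = r + ε * r := by ring
  linarith
end

section
/- Let U be a finite nonempty set and let 𝒮 be a finite nonempty family of subsets of U such that every u ∈ U belongs to some member of 𝒮. Define the point set X = U ⊔ 𝒮 (disjoint union) and the function d : X × X → ℝ by: d(x,x) = 0 for all x; d(S,S') = 1 for all distinct S, S' ∈ 𝒮; d(u,S) = d(S,u) = 1 whenever u ∈ U, S ∈ 𝒮 and u ∈ S; and d(x,y) = 2 for all other pairs of distinct points. Then (i) d is a metric on X, and (ii) the minimum cardinality of a set D ⊆ X such that every x ∈ X satisfies min_{y∈D} d(x,y) ≤ 1 equals the minimum cardinality of a subfamily 𝒮' ⊆ 𝒮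 with U ⊆ ⋃_{S∈𝒮'} S. -/
/-- The point set of the reduction: the disjoint union of the ground set `U` and the
family `𝒮`. -/
abbrev SCSpace (U : Type*) [DecidableEq U] (𝒮 : Finset (Finset U)) : Type _ :=
  U ⊕ {S : Finset U // S ∈ 𝒮}

/-- The distance function of the reduction: `d(x,x) = 0`; `d(S,S') = 1` for distinct
members `S, S'` of `𝒮`; `d(u,S) = d(S,u) = 1` whenever `u ∈ S`; all other pairs of
distinct points are at distance `2`. -/
def scDist {U : Type*} [DecidableEq U] (𝒮 : Finset (Finset U)) :
    SCSpace U 𝒮 → SCSpace U 𝒮 → ℝ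
  | Sum.inl u, Sum.inl u' => if u = u' then 0 else 2
  | Sum.inl u, Sum.inr S => if u ∈ S.1 then 1 else 2
  | Sum.inr S, Sum.inl u => if u ∈ S.1 then 1 else 2
  | Sum.inr S, Sum.inr S' => if S = S' then 0 else 1

/-! A set cover `𝒮'` is itself a `1`-dominating set, viewed as points of `𝒮`: any two
members of `𝒮` are at distance `1`, and `U ≠ ∅` makes `𝒮'` nonempty. Conversely, a
`1`-dominating set `D` becomes a cover no larger than `D` by keeping its points of `𝒮` and
replacing each point `u ∈ U` of `D` by some member of `𝒮` containing `u`. The metric axioms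
hold because all distances between distinct points lie in `[1, 2]`. -/

theorem triangle_of_forall_ne_one_le_of_le_two {X : Type*} (d : X → X → ℝ)
    (hself : ∀ x, d x x = 0) (hne : ∀ x y, x ≠ y → 1 ≤ d x y) (hle : ∀ x y, d x y ≤ 2)
    (x y z : X) : d x z ≤ d x y + d y z := by
  by_cases hxy : x = y
  · simp [hxy, hself]
  by_cases hyz : y = z
  · simp [hyz, hself]
  linarith [hle x z, hne x y hxy, hne y z hyz]

theorem Nat.sInf_eq_sInf_of_forall_exists_le {A B : Set ℕ} (hB : B.Nonempty)
    (hAB : ∀ a ∈ A, ∃ b ∈ B, b ≤ a) (hBA : ∀ b ∈ B, ∃ a ∈ A, a ≤ b) : sInf A = sInf B := by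
  obtain ⟨a, ha, ha_le⟩ := hBA _ (Nat.sInf_mem hB)
  obtain ⟨b, hb, hb_le⟩ := hAB _ (Nat.sInf_mem ⟨a, ha⟩)
  exact le_antisymm (le_trans (Nat.sInf_le ha) ha_le) (le_trans (Nat.sInf_le hb) hb_le)

def IsSetCover {U : Type*} (𝒮' : Finset (Finset U)) : Prop :=
  ∀ u : U, ∃ S ∈ 𝒮', u ∈ S

namespace SCSpace

variable {U : Type*} [DecidableEq U] {𝒮 : Finset (Finset U)}

def IsOneDominating (D : Finset (SCSpace U 𝒮)) : Prop :=
  ∀ x : SCSpace U 𝒮, ∃ y ∈ D, scDist 𝒮 x y ≤ 1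

@[simp]
theorem scDist_self (x : SCSpace U 𝒮) : scDist 𝒮 x x = 0 := by
  cases x <;> simp [scDist]

theorem one_le_scDist {x y : SCSpace U 𝒮} (h : x ≠ y) : 1 ≤ scDist 𝒮 x y := by
  rcases x with u | S <;> rcases y with u' | S' <;> simp only [scDist] <;> split_ifs <;>
    simp_all

theorem scDist_le_two (x y : SCSpace U 𝒮) : scDist 𝒮 x y ≤ 2 := by
  rcases x with u | S <;> rcases y with u' | S' <;> simp only [scDist] <;> split_ifs <;>
    norm_num

theorem eq_of_scDist_eq_zero {x y : SCSpace U 𝒮} (h : scDist 𝒮 x y = 0) : x = y := by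
  by_contra hxy
  linarith [one_le_scDist hxy]

theorem scDist_comm (x y : SCSpace U 𝒮) : scDist 𝒮 x y = scDist 𝒮 y x := by
  rcases x with u | S <;> rcases y with u' | S' <;> simp [scDist, eq_comm]

theorem scDist_triangle (x y z : SCSpace U 𝒮) :
    scDist 𝒮 x z ≤ scDist 𝒮 x y + scDist 𝒮 y z :=
  triangle_of_forall_ne_one_le_of_le_two _ scDist_self (fun _ _ => one_le_scDist)
    scDist_le_two x y z

theorem scDist_inl_inl_le_one_iff {u u' : U} :
    scDist 𝒮 (Sum.inl u) (Sum.inl u') ≤ 1 ↔ u = u' := by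
  by_cases h : u = u' <;> simp [scDist, h]

theorem scDist_inl_inr_le_one_iff {u : U} {S : {S // S ∈ 𝒮}} :
    scDist 𝒮 (Sum.inl u) (Sum.inr S) ≤ 1 ↔ u ∈ S.1 := by
  by_cases h : u ∈ S.1 <;> simp [scDist, h]

theorem scDist_inr_inr_le_one (S S' : {S // S ∈ 𝒮}) :
    scDist 𝒮 (Sum.inr S) (Sum.inr S') ≤ 1 := by
  simp only [scDist]
  split_ifs <;> norm_num

theorem exists_isOneDominating_card_eq [Nonempty U] {𝒮' : Finset (Finset U)}
    (hsub : 𝒮' ⊆ 𝒮) (hcover : IsSetCover 𝒮') :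
    ∃ D : Finset (SCSpace U 𝒮), D.card = 𝒮'.card ∧ IsOneDominating D := by
  let D : Finset (SCSpace U 𝒮) := (𝒮'.subtype (· ∈ 𝒮)).map Function.Embedding.inr
  have hmem {S : {S // S ∈ 𝒮}} : Sum.inr S ∈ D ↔ S.1 ∈ 𝒮' := by simp [D]
  refine ⟨D, ?_, ?_⟩
  · rw [Finset.card_map, Finset.card_subtype, Finset.filter_true_of_mem fun S hS => hsub hS]
  obtain ⟨S₀, hS₀, -⟩ := hcover (Classical.arbitrary U)
  rintro (u | S)
  · obtain ⟨S, hS, huS⟩ := hcover u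
    exact ⟨Sum.inr ⟨S, hsub hS⟩, hmem.2 hS, scDist_inl_inr_le_one_iff.2 huS⟩
  · exact ⟨Sum.inr ⟨S₀, hsub hS₀⟩, hmem.2 hS₀, scDist_inr_inr_le_one _ _⟩

theorem exists_isSetCover_card_le (hfeas : IsSetCover 𝒮) {D : Finset (SCSpace U 𝒮)}
    (hD : IsOneDominating D) : ∃ 𝒮' ⊆ 𝒮, 𝒮'.card ≤ D.card ∧ IsSetCover 𝒮' := by
  choose g hg𝒮 hg using hfeas
  let toSet : SCSpace U 𝒮 → Finset U := Sum.elim g Subtype.val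
  refine ⟨D.image toSet, ?_, Finset.card_image_le, fun u => ?_⟩
  · simp only [Finset.image_subset_iff]
    rintro (u | S) -
    exacts [hg𝒮 u, S.2]
  obtain ⟨y, hyD, hy⟩ := hD (Sum.inl u)
  refine ⟨toSet y, Finset.mem_image_of_mem toSet hyD, ?_⟩
  rcases y with u' | S
  · obtain rfl := scDist_inl_inl_le_one_iff.1 hy
    exact hg u
  · exact scDist_inl_inr_le_one_iff.1 hy

end SCSpace

open SCSpace in
theorem statement15_general (U : Type*) [DecidableEq U] [Nonempty U]
    (𝒮 : Finset (Finset U))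
    (hfeas : ∀ u : U, ∃ S ∈ 𝒮, u ∈ S) :
    ((∀ x, scDist 𝒮 x x = 0) ∧
     (∀ x y, scDist 𝒮 x y = 0 → x = y) ∧
     (∀ x y, scDist 𝒮 x y = scDist 𝒮 y x) ∧
     (∀ x y z, scDist 𝒮 x z ≤ scDist 𝒮 x y + scDist 𝒮 y z)) ∧
    sInf {m : ℕ | ∃ D : Finset (SCSpace U 𝒮), D.card = m ∧
        ∀ x : SCSpace U 𝒮, ∃ y ∈ D, scDist 𝒮 x y ≤ 1} =
    sInf {m : ℕ | ∃ 𝒮' ⊆ 𝒮, 𝒮'.card = m ∧ ∀ u : U, ∃ S ∈ 𝒮', u ∈ S} := by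
  refine ⟨⟨scDist_self, fun _ _ => eq_of_scDist_eq_zero, scDist_comm, scDist_triangle⟩, ?_⟩
  refine Nat.sInf_eq_sInf_of_forall_exists_le ⟨_, 𝒮, subset_rfl, rfl, hfeas⟩ ?_ ?_
  · rintro _ ⟨D, rfl, hD⟩
    obtain ⟨𝒮', hsub, hcard, hcover⟩ := exists_isSetCover_card_le hfeas hD
    exact ⟨_, ⟨𝒮', hsub, rfl, hcover⟩, hcard⟩
  · rintro _ ⟨𝒮', hsub, rfl, hcover⟩
    obtain ⟨D, hcard, hD⟩ := exists_isOneDominating_card_eq hsub hcover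
    exact ⟨_, ⟨D, hcard, hD⟩, le_rfl⟩

/-- given a feasible set cover instance `(U, 𝒮)` with `U` finite nonempty
and `𝒮` finite nonempty, the function `scDist` is a metric on `U ⊔ 𝒮`, and the minimum
size of a `1`-dominating set of this metric space equals the minimum size of a set cover
`𝒮' ⊆ 𝒮` of `U`. -/
theorem statement15 (U : Type*) [Fintype U] [DecidableEq U] [Nonempty U]
    (𝒮 : Finset (Finset U)) (h𝒮 : 𝒮.Nonempty)
    (hfeas : ∀ u : U, ∃ S ∈ 𝒮, u ∈ S) :
    ((∀ x, scDist 𝒮 x x = 0) ∧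
     (∀ x y, scDist 𝒮 x y = 0 → x = y) ∧
     (∀ x y, scDist 𝒮 x y = scDist 𝒮 y x) ∧
     (∀ x y z, scDist 𝒮 x z ≤ scDist 𝒮 x y + scDist 𝒮 y z)) ∧
    sInf {m : ℕ | ∃ D : Finset (SCSpace U 𝒮), D.card = m ∧
        ∀ x : SCSpace U 𝒮, ∃ y ∈ D, scDist 𝒮 x y ≤ 1} =
    sInf {m : ℕ | ∃ 𝒮' ⊆ 𝒮, 𝒮'.card = m ∧ ∀ u : U, ∃ S ∈ 𝒮', u ∈ S} :=
  statement15_general U 𝒮 hfeas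
end

section
/- Let D > 0 and let δ satisfy D ≤ δ < 2D. Let P be the temporal-sampling of length 2 in ℝ (with the usual metric) given by P(1) = P(2) = {0, D, 2D, 3D, 4D}. Then: (i) P admits a temporal (5,0,δ)-median-clustering; and (ii) there exists a set 𝒞 of 5 trajectories of P with δ(𝒞) ≤ δ and rad₁(𝒞) = D such that for every τ ∈ 𝒞 and every trajectory σ ∈ 𝒯_δ(P), rad₁((𝒞 ∖ {τ}) ∪ {σ}) ≥ rad₁(𝒞); that is, 𝒞 is a local minimum of local search with single-trajectory swaps, while the optimal rad₁ cost with 5 clusters is 0. -/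
/-- `rad₁(𝒞) = max_{1 ≤ i ≤ t} Σ_{p ∈ P i} min_{τ ∈ 𝒞} d(p, τ i)`. -/
noncomputable def rad1 {X : Type*} [MetricSpace X] {t : ℕ} (P : Fin t → Finset X)
    (𝒞 : Set (Fin t → X)) : ℝ :=
  ⨆ i : Fin t, levelCost P 𝒞 i

open Finset

section LevelCost

variable {X : Type*} [MetricSpace X] {t : ℕ} (P : Fin t → Finset X) (𝒞 : Set (Fin t → X))
  (i : Fin t)

lemma levelCost_eq_zero_of_covers (hcov : ∀ p ∈ P i, ∃ τ ∈ 𝒞, τ i = p) :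
    levelCost P 𝒞 i = 0 := by
  refine sum_eq_zero fun p hp => le_antisymm ?_ (Real.iInf_nonneg fun _ => dist_nonneg)
  obtain ⟨τ, hτ, rfl⟩ := hcov p hp
  exact (ciInf_le ⟨0, by rintro _ ⟨_, rfl⟩; exact dist_nonneg⟩ ⟨τ, hτ⟩).trans_eq (dist_self _)

lemma levelCost_le_of_covers_erase {p₀ : X} {r : ℝ}
    (hcov : ∀ p ∈ P i, p ≠ p₀ → ∃ τ ∈ 𝒞, τ i = p) (hnear : ∃ τ ∈ 𝒞, dist p₀ (τ i) ≤ r) :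
    levelCost P 𝒞 i ≤ r := by
  classical
  have hbdd (p : X) : BddBelow (Set.range fun τ : 𝒞 => dist p ((τ : Fin t → X) i)) :=
    ⟨0, by rintro _ ⟨_, rfl⟩; exact dist_nonneg⟩
  have hterm : ∀ p ∈ P i, ⨅ τ : 𝒞, dist p ((τ : Fin t → X) i) ≤ if p = p₀ then r else 0 := by
    intro p hp
    split_ifs with h
    · obtain ⟨τ, hτ, hd⟩ := hnear
      exact (ciInf_le (hbdd p) ⟨τ, hτ⟩).trans (h ▸ hd)
    · obtain ⟨τ, hτ, hτp⟩ := hcov p hp h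
      exact (ciInf_le (hbdd p) ⟨τ, hτ⟩).trans_eq (by simp [hτp])
  have hr : 0 ≤ r := let ⟨_, _, hd⟩ := hnear; dist_nonneg.trans hd
  calc levelCost P 𝒞 i ≤ ∑ p ∈ P i, if p = p₀ then r else 0 := sum_le_sum hterm
    _ ≤ r := by rw [sum_ite_eq']; split_ifs <;> simp [hr]

lemma le_levelCost_of_forall_ne {s : ℝ} {p₀ : X}
    (hsep : ∀ p ∈ P i, ∀ q ∈ P i, p ≠ q → s ≤ dist p q) (htraj : ∀ τ ∈ 𝒞, IsTrajectory P τ)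
    (hne : 𝒞.Nonempty) (hp₀ : p₀ ∈ P i) (hmiss : ∀ τ ∈ 𝒞, τ i ≠ p₀) :
    s ≤ levelCost P 𝒞 i := by
  have : Nonempty 𝒞 := hne.to_subtype
  calc s ≤ ⨅ τ : 𝒞, dist p₀ ((τ : Fin t → X) i) :=
        le_ciInf fun τ => hsep p₀ hp₀ _ (htraj τ τ.2 i) (hmiss τ τ.2).symm
    _ ≤ levelCost P 𝒞 i :=
        single_le_sum (f := fun p => ⨅ τ : 𝒞, dist p ((τ : Fin t → X) i))
          (fun _ _ => Real.iInf_nonneg fun _ => dist_nonneg) hp₀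

lemma levelCost_le_rad1 : levelCost P 𝒞 i ≤ rad1 P 𝒞 :=
  le_ciSup (Set.finite_range _).bddAbove i

end LevelCost

lemma dispLE_two_iff {X : Type*} [MetricSpace X] (τ : Fin 2 → X) (δ : ℝ) :
    DispLE τ δ ↔ dist (τ 0) (τ 1) ≤ δ := by
  refine ⟨fun h => h 0 one_lt_two, fun h j hj => ?_⟩
  obtain rfl : j = 0 := by omega
  exact h

lemma isTemporalMedianClustering_const {X : Type*} [MetricSpace X] {t : ℕ}
    (P : Fin t → Finset X) {S : Finset X} (hP : ∀ i, P i = S) (hS : S.Nonempty) {k : ℕ}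
    (hk : S.card ≤ k) {δ : ℝ} (hδ : 0 ≤ δ) :
    IsTemporalMedianClustering P ((fun x (_ : Fin t) => x) '' S) k 0 δ := by
  refine ⟨hS.to_set.image _, Set.toFinite _, ?_, ?_,
    fun i => (levelCost_eq_zero_of_covers P _ i ?_).le, ?_⟩
  · exact (Set.ncard_image_le S.finite_toSet).trans (by rwa [Set.ncard_coe_finset])
  · rintro _ ⟨x, hx, rfl⟩ i
    rwa [hP i]
  · intro p hp
    exact ⟨fun _ => p, ⟨p, hP i ▸ hp, rfl⟩, rfl⟩
  · rintro _ ⟨x, -, rfl⟩ j hj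
    simpa using hδ

section Grid

variable {D : ℝ}

def gridTraj (D : ℝ) {t n : ℕ} (u : Fin t → Fin n) : Fin t → ℝ := fun i => (u i : ℕ) * D

lemma dist_natCast_mul (hD : 0 ≤ D) (a b : ℕ) :
    dist ((a : ℝ) * D) (b * D) = |(a : ℝ) - b| * D := by
  rw [Real.dist_eq, ← sub_mul, abs_mul, abs_of_nonneg hD]

lemma le_dist_natCast_mul (hD : 0 ≤ D) {a b : ℕ} (hab : a ≠ b) :
    D ≤ dist ((a : ℝ) * D) (b * D) := by
  have h : 1 ≤ |(a : ℝ) - b| := by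
    rcases Nat.lt_or_gt_of_ne hab with h | h
    · have : (a : ℝ) + 1 ≤ b := by exact_mod_cast h
      exact le_abs.2 (Or.inr (by linarith))
    · have : (b : ℝ) + 1 ≤ a := by exact_mod_cast h
      exact le_abs.2 (Or.inl (by linarith))
  rw [dist_natCast_mul hD]
  exact le_mul_of_one_le_left hD h

lemma dist_natCast_mul_le (hD : 0 ≤ D) {a b : ℕ} (hab : a ≤ b + 1) (hba : b ≤ a + 1) :
    dist ((a : ℝ) * D) (b * D) ≤ D := by
  have hab' : (a : ℝ) ≤ b + 1 := by exact_mod_cast hab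
  have hba' : (b : ℝ) ≤ a + 1 := by exact_mod_cast hba
  rw [dist_natCast_mul hD]
  exact mul_le_of_le_one_left hD (abs_le.2 ⟨by linarith, by linarith⟩)

lemma adjacent_of_dist_natCast_mul_lt (hD : 0 < D) {a b : ℕ}
    (h : dist ((a : ℝ) * D) (b * D) < 2 * D) : a ≤ b + 1 ∧ b ≤ a + 1 := by
  rw [dist_natCast_mul hD.le] at h
  obtain ⟨h₁, h₂⟩ := abs_lt.1 (lt_of_mul_lt_mul_right h hD.le)
  have hab : a < b + 2 := by exact_mod_cast (by linarith : (a : ℝ) < b + 2)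
  have hba : b < a + 2 := by exact_mod_cast (by linarith : (b : ℝ) < a + 2)
  omega

lemma gridTraj_injective {t n : ℕ} (hD : D ≠ 0) :
    Function.Injective (gridTraj D : (Fin t → Fin n) → Fin t → ℝ) := by
  intro u v h
  funext i
  have := congrFun h i
  simp only [gridTraj, mul_left_inj' hD, Nat.cast_inj] at this
  exact Fin.ext this

lemma image_gridTraj_swap {t n : ℕ} (hD : D ≠ 0) (S : Finset (Fin t → Fin n))
    (u v : Fin t → Fin n) :
    (gridTraj D '' (S : Set (Fin t → Fin n)) \ {gridTraj D u}) ∪ {gridTraj D v} =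
      gridTraj D '' ((insert v (S.erase u) : Finset _) : Set (Fin t → Fin n)) := by
  rw [coe_insert, coe_erase, Set.image_insert_eq, Set.image_sdiff (gridTraj_injective hD),
    Set.image_singleton, Set.union_singleton]

variable {t n : ℕ} {P : Fin t → Finset ℝ}

lemma isTrajectory_gridTraj (hP : ∀ i, P i = univ.image fun k : Fin n => ((k : ℕ) : ℝ) * D)
    (u : Fin t → Fin n) : IsTrajectory P (gridTraj D u) :=
  fun i => hP i ▸ mem_image_of_mem _ (mem_univ _)

lemma exists_gridTraj_eq (hP : ∀ i, P i = univ.image fun k : Fin n => ((k : ℕ) : ℝ) * D)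
    {σ : Fin t → ℝ} (hσ : IsTrajectory P σ) : ∃ u : Fin t → Fin n, gridTraj D u = σ := by
  choose u _ hu using fun i => mem_image.1 (hP i ▸ hσ i)
  exact ⟨u, funext hu⟩

lemma le_levelCost_image_gridTraj
    (hP : ∀ i, P i = univ.image fun k : Fin n => ((k : ℕ) : ℝ) * D) (hD : 0 < D)
    {S : Finset (Fin t → Fin n)} (hS : S.Nonempty) {i : Fin t} {g : Fin n}
    (hmiss : ∀ u ∈ S, u i ≠ g) :
    D ≤ levelCost P (gridTraj D '' (S : Set (Fin t → Fin n))) i := by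
  refine le_levelCost_of_forall_ne P _ i (p₀ := (g : ℕ) * D) ?_ ?_ (hS.to_set.image _) ?_ ?_
  · intro p hp q hq hpq
    rw [hP] at hp hq
    obtain ⟨a, -, rfl⟩ := mem_image.1 hp
    obtain ⟨b, -, rfl⟩ := mem_image.1 hq
    exact le_dist_natCast_mul hD.le fun h => hpq (by rw [Fin.val_injective h])
  · rintro _ ⟨u, -, rfl⟩
    exact isTrajectory_gridTraj hP u
  · exact hP i ▸ mem_image_of_mem _ (mem_univ _)
  · rintro _ ⟨u, hu, rfl⟩ h
    simp only [gridTraj, mul_left_inj' hD.ne', Nat.cast_inj] at h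
    exact hmiss u hu (Fin.ext h)

end Grid

/-- Index form of `{(0,0), (0,D), (D,2D), (2D,3D), (3D,4D)}`. -/
def shiftIdx : Finset (Fin 2 → Fin 5) := {![0, 0], ![0, 1], ![1, 2], ![2, 3], ![3, 4]}

/-- A single swap cannot cover both levels: the only swaps covering `4D` at the first level
replace `(0,0)` or `(0,D)` by a trajectory starting at `4D`, which then ends at `3D` or `4D`
and leaves `0` or `D` uncovered at the second level. -/
lemma shiftIdx_swap_misses : ∀ u ∈ shiftIdx, ∀ v : Fin 2 → Fin 5,
    (v 0 : ℕ) ≤ v 1 + 1 → (v 1 : ℕ) ≤ v 0 + 1 →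
      ∃ i g, ∀ w ∈ insert v (shiftIdx.erase u), w i ≠ g := by
  decide

lemma shiftIdx_adjacent : ∀ u ∈ shiftIdx, (u 0 : ℕ) ≤ u 1 + 1 ∧ (u 1 : ℕ) ≤ u 0 + 1 := by
  decide

section Shift

variable {D δ : ℝ} {P : Fin 2 → Finset ℝ}

lemma rad1_image_gridTraj_shiftIdx (hD : 0 < D)
    (hP : ∀ i, P i = univ.image fun k : Fin 5 => ((k : ℕ) : ℝ) * D) :
    rad1 P (gridTraj D '' (shiftIdx : Set (Fin 2 → Fin 5))) = D := by
  set 𝒞 := gridTraj D '' (shiftIdx : Set (Fin 2 → Fin 5))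
  have hcov (i : Fin 2) (k : Fin 5) (h : ∃ u ∈ shiftIdx, u i = k) :
      ∃ τ ∈ 𝒞, τ i = (k : ℕ) * D := by
    obtain ⟨u, hu, rfl⟩ := h
    exact ⟨_, ⟨u, hu, rfl⟩, rfl⟩
  have h₀ : levelCost P 𝒞 0 ≤ D := by
    refine levelCost_le_of_covers_erase P 𝒞 0 (p₀ := ((4 : Fin 5) : ℕ) * D) ?_
      ⟨gridTraj D ![3, 4], ⟨_, by decide, rfl⟩, ?_⟩
    · intro p hp hne
      obtain ⟨k, -, rfl⟩ := mem_image.1 (hP 0 ▸ hp)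
      have hk : k ≠ 4 := by rintro rfl; exact hne rfl
      exact hcov 0 k ((by decide : ∀ k : Fin 5, k ≠ 4 → ∃ u ∈ shiftIdx, u 0 = k) k hk)
    · exact dist_natCast_mul_le hD.le (by decide) (by decide)
  have h₁ : levelCost P 𝒞 1 = 0 := by
    refine levelCost_eq_zero_of_covers P 𝒞 1 fun p hp => ?_
    obtain ⟨k, -, rfl⟩ := mem_image.1 (hP 1 ▸ hp)
    exact hcov 1 k ((by decide : ∀ k : Fin 5, ∃ u ∈ shiftIdx, u 1 = k) k)
  refine le_antisymm (ciSup_le fun i => ?_) ?_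
  · fin_cases i
    exacts [h₀, h₁.trans_le hD.le]
  · have hmiss : ∀ u ∈ shiftIdx, u 0 ≠ 4 := by decide
    exact (le_levelCost_image_gridTraj hP hD ⟨![0, 0], by decide⟩ hmiss).trans
      (levelCost_le_rad1 P 𝒞 0)

lemma rad1_image_gridTraj_shiftIdx_le_swap (hD : 0 < D) (hδ : δ < 2 * D)
    (hP : ∀ i, P i = univ.image fun k : Fin 5 => ((k : ℕ) : ℝ) * D)
    {τ : Fin 2 → ℝ} (hτ : τ ∈ gridTraj D '' (shiftIdx : Set (Fin 2 → Fin 5)))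
    {σ : Fin 2 → ℝ} (hσ : IsTrajectory P σ) (hσδ : DispLE σ δ) :
    rad1 P (gridTraj D '' (shiftIdx : Set (Fin 2 → Fin 5))) ≤
      rad1 P ((gridTraj D '' (shiftIdx : Set (Fin 2 → Fin 5)) \ {τ}) ∪ {σ}) := by
  obtain ⟨u, hu, rfl⟩ := hτ
  obtain ⟨v, rfl⟩ := exists_gridTraj_eq hP hσ
  obtain ⟨hv₀, hv₁⟩ := adjacent_of_dist_natCast_mul_lt hD
    (((dispLE_two_iff _ δ).1 hσδ).trans_lt hδ)
  obtain ⟨i, g, hmiss⟩ := shiftIdx_swap_misses u hu v hv₀ hv₁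
  rw [rad1_image_gridTraj_shiftIdx hD hP, image_gridTraj_swap hD.ne']
  exact (le_levelCost_image_gridTraj hP hD (insert_nonempty _ _) hmiss).trans
    (levelCost_le_rad1 P _ i)

end Shift

/-- for `D > 0` and `D ≤ δ < 2D`, the temporal-sampling of length `2` in
`ℝ` with `P(1) = P(2) = {0, D, 2D, 3D, 4D}` admits a temporal `(5,0,δ)`-median-clustering
(optimal cost `0`), yet there is a set `𝒞` of `5` trajectories with `δ(𝒞) ≤ δ` and
`rad₁(𝒞) = D` which is a local minimum for single-trajectory swaps: replacing any
`τ ∈ 𝒞` by any trajectory `σ ∈ 𝒯_δ(P)` does not decrease `rad₁`. -/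
theorem statement16 (D δ : ℝ) (hD : 0 < D) (hδ₁ : D ≤ δ) (hδ₂ : δ < 2 * D)
    (P : Fin 2 → Finset ℝ) (hPdef : ∀ i, P i = {0, D, 2 * D, 3 * D, 4 * D}) :
    (∃ 𝒞 : Set (Fin 2 → ℝ), IsTemporalMedianClustering P 𝒞 5 0 δ) ∧
    (∃ 𝒞 : Set (Fin 2 → ℝ),
      𝒞.Finite ∧ 𝒞.ncard = 5 ∧
      (∀ τ ∈ 𝒞, IsTrajectory P τ ∧ DispLE τ δ) ∧
      rad1 P 𝒞 = D ∧
      (∀ τ ∈ 𝒞, ∀ σ : Fin 2 → ℝ, IsTrajectory P σ → DispLE σ δ →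
        rad1 P 𝒞 ≤ rad1 P ((𝒞 \ {τ}) ∪ {σ}))) := by
  have hgrid : ({0, D, 2 * D, 3 * D, 4 * D} : Finset ℝ) =
      univ.image fun k : Fin 5 => ((k : ℕ) : ℝ) * D := by
    ext x
    norm_num [Fin.exists_fin_succ, eq_comm]
  have hP i : P i = univ.image fun k : Fin 5 => ((k : ℕ) : ℝ) * D := (hPdef i).trans hgrid
  refine ⟨⟨_, isTemporalMedianClustering_const P hPdef (by simp)
      (hgrid ▸ card_image_le.trans (by simp)) (hD.le.trans hδ₁)⟩,
    _, Set.toFinite _, ?_, fun τ hτ => ⟨?_, ?_⟩, rad1_image_gridTraj_shiftIdx hD hP,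
    fun τ hτ σ hσ hσδ => rad1_image_gridTraj_shiftIdx_le_swap hD hδ₂ hP hτ hσ hσδ⟩
  · rw [Set.ncard_image_of_injective _ (gridTraj_injective hD.ne'), Set.ncard_coe_finset]
    rfl
  · obtain ⟨u, -, rfl⟩ := hτ
    exact isTrajectory_gridTraj hP u
  · obtain ⟨u, hu, rfl⟩ := hτ
    obtain ⟨h₀₁, h₁₀⟩ := shiftIdx_adjacent u hu
    exact (dispLE_two_iff _ δ).2 ((dist_natCast_mul_le hD.le h₀₁ h₁₀).trans hδ₁)
end
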